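/- arXiv:0711.2722 — 7 statements merged into one kernel-verified Lean document; each statement's English description precedes it below -/
import Mathlib

section
/- Let M ≥ N ≥ 1 be integers and set α = 2(M−N). Then for all integers j, k ≥ 0: ∫_0^∞ ( L_j^{(α)}(2Mx) · (d/dx)L_k^{(α)}(2Mx) − (d/dx)L_j^{(α)}(2Mx) · L_k^{(α)}(2Mx) ) x^{2(M−N)+1} e^{−2Mx} dx equals (1/(2M))^{2(M−N)+1} · (j+2(M−N))!/(j−1)! if j = k+1, equals −(1/(2M))^{2(M−N)+1} · (k+2(M−N))!/(k−1)! if k = j+1, and equals 0 otherwise. -/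
open MeasureTheory

/-- Generalized Laguerre polynomial `L_n^{(α)}`. -/
noncomputable def Lag (n α : ℕ) (x : ℝ) : ℝ :=
  ∑ k ∈ Finset.range (n+1),
    (-1:ℝ)^k * (Nat.choose (n+α) (n-k) : ℝ) * x^k / (Nat.factorial k : ℝ)

namespace LagAux

open Finset Real

noncomputable def coef (n α p : ℕ) : ℝ :=
  (-1:ℝ)^p * (Nat.choose (n+α) (n-p) : ℝ) / (Nat.factorial p : ℝ)

lemma Lag_eq (n α : ℕ) (t : ℝ) : Lag n α t = ∑ p ∈ range (n+1), coef n α p * t^p := by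
  unfold Lag coef
  refine Finset.sum_congr rfl fun p _ => by ring

lemma alt_sum (n : ℕ) :
    ∑ i ∈ range (n+1), (-1:ℝ)^i * (n.choose i : ℝ) = if n = 0 then 1 else 0 := by
  have h := Int.alternating_sum_range_choose (n := n)
  have : ((∑ i ∈ range (n+1), ((-1)^i * n.choose i : ℤ) : ℤ) : ℝ)
      = ∑ i ∈ range (n+1), (-1:ℝ)^i * (n.choose i : ℝ) := by push_cast; rfl
  rw [← this, h]
  split_ifs <;> norm_num

/-- Key binomial identity `A`. -/
lemma A_id : ∀ (l m β : ℕ),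
    ∑ k ∈ range (m+1), (-1:ℝ)^k * ((m+β).choose (β+k) : ℝ) * ((k+l+β).choose k : ℝ)
    = if m ≤ l then (-1:ℝ)^m * (l.choose m : ℝ) else 0 := by
  intro l
  induction l with
  | zero =>
    intro m β
    have key : ∀ k ∈ range (m+1),
        (-1:ℝ)^k * ((m+β).choose (β+k) : ℝ) * ((k+0+β).choose k : ℝ)
        = ((m+β).choose β : ℝ) * ((-1:ℝ)^k * (m.choose k : ℝ)) := by
      intro k hk
      have hk' : k ≤ m := by simpa using Nat.lt_succ_iff.mp (mem_range.mp hk)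
      have h1 : (k+0+β).choose k = (β+k).choose β := by
        rw [show k+0+β = β+k by omega]
        rw [← Nat.choose_symm (Nat.le_add_right β k), show β+k-β = k by omega]
      have h2 : (m+β).choose (β+k) * (β+k).choose β = (m+β).choose β * m.choose k := by
        have := Nat.choose_mul (n := m+β) (k := β+k) (s := β) (by omega)
        rwa [show m+β-β = m by omega, show β+k-β = k by omega] at this
      rw [h1]
      have h2' : (((m+β).choose (β+k) : ℝ)) * ((β+k).choose β : ℝ)
          = ((m+β).choose β : ℝ) * (m.choose k : ℝ) := by exact_mod_cast h2
      calc (-1:ℝ)^k * ((m+β).choose (β+k) : ℝ) * ((β+k).choose β : ℝ)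
          = (-1:ℝ)^k * (((m+β).choose (β+k) : ℝ) * ((β+k).choose β : ℝ)) := by ring
        _ = (-1:ℝ)^k * (((m+β).choose β : ℝ) * (m.choose k : ℝ)) := by rw [h2']
        _ = ((m+β).choose β : ℝ) * ((-1:ℝ)^k * (m.choose k : ℝ)) := by ring
    rw [Finset.sum_congr rfl key, ← Finset.mul_sum, alt_sum]
    rcases Nat.eq_zero_or_pos m with hm | hm
    · subst hm; simp
    · rw [if_neg (by omega), if_neg (by omega), mul_zero]
  | succ l ih =>
    intro m β
    match m with
    | 0 => simp
    | m'+1 =>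
      have e1 : ∑ k ∈ range (m'+1+1),
          (-1:ℝ)^k * ((m'+1+β).choose (β+k) : ℝ) * ((k+(l+1)+β).choose k : ℝ)
          = (∑ k ∈ range (m'+1+1),
              (-1:ℝ)^k * ((m'+1+β).choose (β+k) : ℝ) * ((k+l+β).choose k : ℝ))
            - ∑ i ∈ range (m'+1),
              (-1:ℝ)^i * ((m'+(β+1)).choose ((β+1)+i) : ℝ) * ((i+l+(β+1)).choose i : ℝ) := by
        rw [Finset.sum_range_succ' (fun k => (-1:ℝ)^k * ((m'+1+β).choose (β+k) : ℝ)
              * ((k+(l+1)+β).choose k : ℝ)) (m'+1),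
            Finset.sum_range_succ' (fun k => (-1:ℝ)^k * ((m'+1+β).choose (β+k) : ℝ)
              * ((k+l+β).choose k : ℝ)) (m'+1)]
        have term : ∀ i ∈ range (m'+1),
            (-1:ℝ)^(i+1) * ((m'+1+β).choose (β+(i+1)) : ℝ) * (((i+1)+(l+1)+β).choose (i+1) : ℝ)
            = (-1:ℝ)^(i+1) * ((m'+1+β).choose (β+(i+1)) : ℝ) * (((i+1)+l+β).choose (i+1) : ℝ)
              - (-1:ℝ)^i * ((m'+(β+1)).choose ((β+1)+i) : ℝ) * ((i+l+(β+1)).choose i : ℝ) := by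
          intro i _
          have hp : ((i+1)+(l+1)+β).choose (i+1)
              = ((i+1)+l+β).choose i + ((i+1)+l+β).choose (i+1) := by
            rw [show (i+1)+(l+1)+β = ((i+1)+l+β)+1 by omega]
            exact Nat.choose_succ_succ _ i
          rw [hp]
          have h3 : (m'+(β+1)).choose ((β+1)+i) = (m'+1+β).choose (β+(i+1)) := by
            rw [show m'+(β+1) = m'+1+β by omega, show (β+1)+i = β+(i+1) by omega]
          have h4 : (i+l+(β+1)).choose i = ((i+1)+l+β).choose i := by
            rw [show i+l+(β+1) = (i+1)+l+β by omega]
          rw [h3, h4]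
          push_cast
          ring
        rw [Finset.sum_congr rfl term, Finset.sum_sub_distrib]
        simp only [Nat.choose_zero_right, Nat.cast_one]
        ring
      rw [e1, ih (m'+1) β, ih m' (β+1)]
      by_cases h1 : m'+1 ≤ l
      · rw [if_pos h1, if_pos (by omega), if_pos (by omega)]
        have : (l+1).choose (m'+1) = l.choose m' + l.choose (m'+1) := Nat.choose_succ_succ l m'
        rw [this]
        push_cast
        ring
      · by_cases h2 : m' ≤ l
        · have hlm : l = m' := by omega
          subst hlm
          rw [if_neg h1, if_pos (by omega), if_pos (by omega)]
          simp [pow_succ]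
        · rw [if_neg h1, if_neg (by omega), if_neg (by omega)]
          ring

/-- `B` identity: moment of a single Laguerre polynomial. -/
lemma B_id (α m q : ℕ) :
    ∑ p ∈ range (m+1), coef m α p * ((p+q+α).factorial : ℝ)
    = ((q+α).factorial : ℝ) * (if m ≤ q then (-1:ℝ)^m * (q.choose m : ℝ) else 0) := by
  have key : ∀ p ∈ range (m+1),
      coef m α p * ((p+q+α).factorial : ℝ)
      = ((q+α).factorial : ℝ) * ((-1:ℝ)^p * ((m+α).choose (α+p) : ℝ) * ((p+q+α).choose p : ℝ)) := by
    intro p hp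
    have hp' : p ≤ m := Nat.lt_succ_iff.mp (mem_range.mp hp)
    have hsym : (m+α).choose (m-p) = (m+α).choose (α+p) := by
      have := Nat.choose_symm (n := m+α) (k := α+p) (by omega)
      rwa [show m+α-(α+p) = m-p by omega] at this
    have hfac : (p+q+α).choose p * p.factorial * (q+α).factorial = (p+q+α).factorial := by
      have := Nat.choose_mul_factorial_mul_factorial (n := p+q+α) (k := p) (by omega)
      rwa [show p+q+α-p = q+α by omega] at this
    unfold coef
    rw [hsym]
    have hfac' : ((p+q+α).choose p : ℝ) * (p.factorial : ℝ) * ((q+α).factorial : ℝ)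
        = ((p+q+α).factorial : ℝ) := by exact_mod_cast hfac
    have hpne : (p.factorial : ℝ) ≠ 0 := by positivity
    field_simp
    rw [← hfac']
    ring
  rw [Finset.sum_congr rfl key, ← Finset.mul_sum]
  congr 1
  exact A_id q m α

/-- Orthogonality sum `G`. -/
lemma G_id (α m n : ℕ) :
    ∑ q ∈ range (n+1), ∑ p ∈ range (m+1),
      coef m α p * coef n α q * ((p+q+α).factorial : ℝ)
    = if m = n then ((n+α).factorial : ℝ) / (n.factorial : ℝ) else 0 := by
  have inner : ∀ q, ∑ p ∈ range (m+1), coef m α p * coef n α q * ((p+q+α).factorial : ℝ)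
      = coef n α q * (((q+α).factorial : ℝ) * (if m ≤ q then (-1:ℝ)^m * (q.choose m : ℝ) else 0)) := by
    intro q
    rw [← B_id α m q, Finset.mul_sum]
    exact Finset.sum_congr rfl fun p _ => by ring
  rw [Finset.sum_congr rfl fun q _ => inner q]
  by_cases hmn : m ≤ n
  · -- restrict the sum to q ≥ m
    have h0 : ∑ q ∈ range (n+1), coef n α q * (((q+α).factorial : ℝ)
          * (if m ≤ q then (-1:ℝ)^m * (q.choose m : ℝ) else 0))
        = ∑ i ∈ range (n-m+1), coef n α (m+i) * (((m+i+α).factorial : ℝ)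
          * ((-1:ℝ)^m * ((m+i).choose m : ℝ))) := by
      nth_rewrite 1 [Finset.range_eq_Ico]
      rw [← Finset.sum_Ico_consecutive _ (Nat.zero_le m) (by omega : m ≤ n+1)]
      have hz : ∑ q ∈ Finset.Ico 0 m, coef n α q * (((q+α).factorial : ℝ)
          * (if m ≤ q then (-1:ℝ)^m * (q.choose m : ℝ) else 0)) = 0 := by
        refine Finset.sum_eq_zero fun q hq => ?_
        rw [if_neg (by have := (Finset.mem_Ico.mp hq).2; omega), mul_zero, mul_zero]
      rw [hz, zero_add, Finset.sum_Ico_eq_sum_range, show n+1-m = n-m+1 by omega]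
      refine Finset.sum_congr rfl fun i _ => ?_
      rw [if_pos (by omega)]
    rw [h0]
    have key : ∀ i ∈ range (n-m+1),
        coef n α (m+i) * (((m+i+α).factorial : ℝ) * ((-1:ℝ)^m * ((m+i).choose m : ℝ)))
        = (((n+α).factorial : ℝ) / ((m.factorial : ℝ) * ((n-m).factorial : ℝ)))
          * ((-1:ℝ)^i * ((n-m).choose i : ℝ)) := by
      intro i hi
      have hi' : i ≤ n-m := Nat.lt_succ_iff.mp (mem_range.mp hi)
      have h1 : (n+α).choose (n-m-i) * (n-m-i).factorial * (m+i+α).factorial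
          = (n+α).factorial := by
        have := Nat.choose_mul_factorial_mul_factorial (n := n+α) (k := n-m-i) (by omega)
        rwa [show n+α-(n-m-i) = m+i+α by omega] at this
      have h2 : (m+i).choose m * m.factorial * i.factorial = (m+i).factorial := by
        have := Nat.choose_mul_factorial_mul_factorial (n := m+i) (k := m) (by omega)
        rwa [show m+i-m = i by omega] at this
      have h3 : (n-m).choose i * i.factorial * (n-m-i).factorial = (n-m).factorial := by
        have := Nat.choose_mul_factorial_mul_factorial (n := n-m) (k := i) (by omega)
        rwa [show n-m-i = n-m-i by rfl] at this
      have keynat : (n+α).choose (n-m-i) * (m+i+α).factorial * ((m+i).choose m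
            * (m.factorial * (n-m).factorial))
          = (n+α).factorial * ((n-m).choose i * (m+i).factorial) := by
        refine Nat.eq_of_mul_eq_mul_right
          (Nat.mul_pos (Nat.factorial_pos i) (Nat.factorial_pos (n-m-i))) ?_
        calc (n+α).choose (n-m-i) * (m+i+α).factorial * ((m+i).choose m
              * (m.factorial * (n-m).factorial)) * (i.factorial * (n-m-i).factorial)
            = ((n+α).choose (n-m-i) * (n-m-i).factorial * (m+i+α).factorial)
              * ((m+i).choose m * m.factorial * i.factorial) * (n-m).factorial := by ring
          _ = (n+α).factorial * (m+i).factorial * (n-m).factorial := by rw [h1, h2]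
          _ = (n+α).factorial * ((n-m).choose i * i.factorial * (n-m-i).factorial)
              * (m+i).factorial := by rw [h3]; ring
          _ = (n+α).factorial * ((n-m).choose i * (m+i).factorial)
              * (i.factorial * (n-m-i).factorial) := by ring
      have keyR : ((n+α).choose (n-m-i) : ℝ) * ((m+i+α).factorial : ℝ) * (((m+i).choose m : ℝ)
            * ((m.factorial : ℝ) * ((n-m).factorial : ℝ)))
          = ((n+α).factorial : ℝ) * (((n-m).choose i : ℝ) * ((m+i).factorial : ℝ)) := by
        exact_mod_cast keynat
      unfold coef
      rw [show n-(m+i) = n-m-i by omega]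
      have hsgn : (-1:ℝ)^(m+i) * (-1:ℝ)^m = (-1:ℝ)^i := by
        rw [pow_add, mul_right_comm, ← pow_add, show m+m = 2*m by ring, pow_mul]
        norm_num
      have hne1 : ((m+i).factorial : ℝ) ≠ 0 := by positivity
      have hne2 : (m.factorial : ℝ) ≠ 0 := by positivity
      have hne3 : ((n-m).factorial : ℝ) ≠ 0 := by positivity
      have R1 : ((n+α).choose (n-m-i) : ℝ) * ((m+i+α).factorial : ℝ) * ((m+i).choose m : ℝ)
            / ((m+i).factorial : ℝ)
          = ((n+α).factorial : ℝ) / ((m.factorial : ℝ) * ((n-m).factorial : ℝ))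
            * ((n-m).choose i : ℝ) := by
        rw [div_eq_iff hne1, div_mul_eq_mul_div, div_mul_eq_mul_div, eq_div_iff (by positivity)]
        linear_combination keyR
      calc (-1:ℝ)^(m+i) * ((n+α).choose (n-m-i) : ℝ) / ((m+i).factorial : ℝ)
            * (((m+i+α).factorial : ℝ) * ((-1:ℝ)^m * ((m+i).choose m : ℝ)))
          = ((-1:ℝ)^(m+i) * (-1:ℝ)^m) * (((n+α).choose (n-m-i) : ℝ)
            * ((m+i+α).factorial : ℝ) * ((m+i).choose m : ℝ) / ((m+i).factorial : ℝ)) := by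
            ring
        _ = (-1:ℝ)^i * (((n+α).factorial : ℝ) / ((m.factorial : ℝ) * ((n-m).factorial : ℝ))
            * ((n-m).choose i : ℝ)) := by rw [hsgn, R1]
        _ = ((n+α).factorial : ℝ) / ((m.factorial : ℝ) * ((n-m).factorial : ℝ))
            * ((-1:ℝ)^i * ((n-m).choose i : ℝ)) := by ring
    rw [Finset.sum_congr rfl key, ← Finset.mul_sum, alt_sum]
    by_cases hmn2 : m = n
    · subst hmn2
      rw [if_pos (by omega), if_pos rfl]
      simp
    · rw [if_neg (by omega), if_neg hmn2, mul_zero]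
  · rw [if_neg (by omega)]
    refine Finset.sum_eq_zero fun q hq => ?_
    rw [if_neg (by have := mem_range.mp hq; omega), mul_zero, mul_zero]

/-- Derivative-coefficient recurrence. -/
lemma sum_q (α k : ℕ) (Y : ℕ → ℝ) :
    ∑ q ∈ range (k+1), (q:ℝ) * coef k α q * Y q
    = (k:ℝ) * ∑ q ∈ range (k+1), coef k α q * Y q
      - ((k:ℝ)+α) * ∑ q ∈ range k, coef (k-1) α q * Y q := by
  have key : ∀ q ∈ range k, ((k:ℝ) - q) * (coef k α q * Y q)
      = ((k:ℝ)+α) * (coef (k-1) α q * Y q) := by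
    intro q hq
    have hq' : q < k := mem_range.mp hq
    obtain ⟨r, hr⟩ : ∃ r, k = q + r + 1 := ⟨k - q - 1, by omega⟩
    subst hr
    have hch : (q+r+α+1) * (q+r+α).choose r = (q+r+α+1).choose (r+1) * (r+1) := by
      have := Nat.add_one_mul_choose_eq (q+r+α) r
      simpa [Nat.succ_eq_add_one] using this
    unfold coef
    rw [show q+r+1-q = r+1 by omega, show q+r+1-1 = q+r by omega, show q+r-q = r by omega]
    have hchR : ((q:ℝ)+r+α+1) * ((q+r+α).choose r : ℝ)
        = ((q+r+α+1).choose (r+1) : ℝ) * ((r:ℝ)+1) := by exact_mod_cast hch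
    have hne : (q.factorial : ℝ) ≠ 0 := by positivity
    rw [show q+r+1+α = q+r+α+1 by omega]
    push_cast
    field_simp
    ring_nf
    ring_nf at hchR
    linear_combination (-(Y q)) * hchR
  have E : (k:ℝ) * (∑ q ∈ range (k+1), coef k α q * Y q)
        - ∑ q ∈ range (k+1), (q:ℝ) * coef k α q * Y q
      = ((k:ℝ)+α) * ∑ q ∈ range k, coef (k-1) α q * Y q := by
    rw [Finset.mul_sum, ← Finset.sum_sub_distrib]
    have : ∀ q ∈ range (k+1), (k:ℝ) * (coef k α q * Y q) - (q:ℝ) * coef k α q * Y q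
        = ((k:ℝ) - q) * (coef k α q * Y q) := fun q _ => by ring
    rw [Finset.sum_congr rfl this, Finset.sum_range_succ, sub_self, zero_mul, add_zero,
      Finset.sum_congr rfl key, ← Finset.mul_sum]
  linarith [E]

/-- The double sum `T` showing up in the integral. -/
noncomputable def T (α j k : ℕ) : ℝ :=
  ∑ p ∈ range (j+1), ∑ q ∈ range k,
    coef j α p * coef k α (q+1) * ((q:ℝ)+1) * ((p+q+(α+1)).factorial : ℝ)

lemma T_eq (α j k : ℕ) :
    T α j k = (k:ℝ) * (if j = k then ((k+α).factorial:ℝ)/(k.factorial:ℝ) else 0)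
      - ((k:ℝ)+α) * (if k = j+1 then ((j+α).factorial:ℝ)/(j.factorial:ℝ) else 0) := by
  have inner : ∀ p, ∑ q ∈ range k, coef j α p * coef k α (q+1) * ((q:ℝ)+1)
        * ((p+q+(α+1)).factorial : ℝ)
      = coef j α p * ((k:ℝ) * ∑ q ∈ range (k+1), coef k α q * ((p+q+α).factorial : ℝ)
        - ((k:ℝ)+α) * ∑ q ∈ range k, coef (k-1) α q * ((p+q+α).factorial : ℝ)) := by
    intro p
    rw [← sum_q α k (fun q => ((p+q+α).factorial : ℝ))]
    rw [Finset.sum_range_succ' (fun q => (q:ℝ) * coef k α q * ((p+q+α).factorial : ℝ)) k]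
    simp only [Nat.cast_zero, zero_mul]
    rw [add_zero, Finset.mul_sum]
    refine Finset.sum_congr rfl fun q _ => ?_
    rw [show p+(q+1)+α = p+q+(α+1) by omega]
    push_cast
    ring
  unfold T
  rw [Finset.sum_congr rfl fun p _ => inner p]
  have split : ∑ p ∈ range (j+1), coef j α p
        * ((k:ℝ) * ∑ q ∈ range (k+1), coef k α q * ((p+q+α).factorial : ℝ)
          - ((k:ℝ)+α) * ∑ q ∈ range k, coef (k-1) α q * ((p+q+α).factorial : ℝ))
      = (k:ℝ) * ∑ q ∈ range (k+1), ∑ p ∈ range (j+1),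
          coef j α p * coef k α q * ((p+q+α).factorial : ℝ)
        - ((k:ℝ)+α) * ∑ q ∈ range k, ∑ p ∈ range (j+1),
          coef j α p * coef (k-1) α q * ((p+q+α).factorial : ℝ) := by
    rw [Finset.sum_comm (s := range (k+1)), Finset.sum_comm (s := range k),
      Finset.mul_sum, Finset.mul_sum, ← Finset.sum_sub_distrib]
    refine Finset.sum_congr rfl fun p _ => ?_
    rw [Finset.mul_sum, Finset.mul_sum, Finset.mul_sum, Finset.mul_sum]
    rw [mul_sub]
    congr 1 <;> rw [Finset.mul_sum] <;> exact Finset.sum_congr rfl fun q _ => by ring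
  rw [split, G_id]
  congr 1
  match k with
  | 0 => simp
  | k'+1 =>
    simp only [Nat.add_sub_cancel]
    rw [G_id α j k']
    congr 1
    by_cases h : j = k'
    · rw [if_pos h, if_pos (by omega), h]
    · rw [if_neg h, if_neg (by omega)]

lemma T_diff (α j k : ℕ) :
    T α j k - T α k j
    = if j = k+1 then ((j+α).factorial:ℝ)/((j-1).factorial:ℝ)
      else if k = j+1 then -(((k+α).factorial:ℝ)/((k-1).factorial:ℝ)) else 0 := by
  rw [T_eq, T_eq]
  by_cases h1 : j = k+1
  · subst h1
    rw [if_pos rfl]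
    rw [if_neg (by omega), if_neg (by omega), if_neg (by omega), if_pos rfl]
    rw [show k+1-1 = k by omega, show k+1+α = (k+α)+1 by omega, Nat.factorial_succ]
    push_cast
    ring
  · rw [if_neg h1]
    by_cases h2 : k = j+1
    · subst h2
      rw [if_pos rfl, if_neg (by omega), if_pos rfl, if_neg (by omega), if_neg (by omega)]
      rw [show j+1-1 = j by omega, show j+1+α = (j+α)+1 by omega, Nat.factorial_succ]
      push_cast
      ring
    · rw [if_neg h2]
      by_cases h3 : j = k
      · subst h3
        rw [if_neg h1, if_neg h1]
        ring
      · rw [if_neg h3, if_neg h2, if_neg (fun (h : k = j) => h3 h.symm), if_neg h1]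
        ring

lemma LagComp_eq (n α : ℕ) (c x : ℝ) :
    Lag n α (c*x) = ∑ p ∈ range (n+1), coef n α p * c^p * x^p := by
  rw [Lag_eq]
  exact Finset.sum_congr rfl fun p _ => by rw [mul_pow]; ring

lemma hasDerivAt_LagComp (n α : ℕ) (c x : ℝ) :
    HasDerivAt (fun y => Lag n α (c*y))
      (∑ q ∈ range n, coef n α (q+1) * c^(q+1) * ((q:ℝ)+1) * x^q) x := by
  have h : (fun y => Lag n α (c*y)) = fun y => ∑ p ∈ range (n+1), coef n α p * c^p * y^p := by
    funext y; exact LagComp_eq n α c y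
  rw [h]
  have H : HasDerivAt (fun y : ℝ => ∑ p ∈ range (n+1), coef n α p * c^p * y^p)
      (∑ p ∈ range (n+1), coef n α p * c^p * ((p:ℝ) * x^(p-1))) x := by
    refine HasDerivAt.fun_sum fun p _ => ?_
    exact (hasDerivAt_pow p x).const_mul _
  convert H using 1
  rw [Finset.sum_range_succ' (fun p => coef n α p * c^p * ((p:ℝ) * x^(p-1))) n]
  simp only [Nat.cast_zero, zero_mul, mul_zero, add_zero]
  refine Finset.sum_congr rfl fun q _ => ?_
  rw [show q+1-1 = q by omega]
  push_cast
  ring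

lemma deriv_LagComp (n α : ℕ) (c x : ℝ) :
    deriv (fun y => Lag n α (c*y)) x
    = ∑ q ∈ range n, coef n α (q+1) * c^(q+1) * ((q:ℝ)+1) * x^q :=
  (hasDerivAt_LagComp n α c x).deriv

lemma integrableOn_pow_exp {c : ℝ} (hc : 0 < c) (m : ℕ) :
    IntegrableOn (fun x : ℝ => x^m * Real.exp (-(c*x))) (Set.Ioi 0) := by
  have h := integrableOn_rpow_mul_exp_neg_mul_rpow (s := (m:ℝ)) (p := 1)
    (lt_of_lt_of_le neg_one_lt_zero (Nat.cast_nonneg m)) one_pos hc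
  refine h.congr_fun (fun x hx => ?_) measurableSet_Ioi
  beta_reduce
  rw [Real.rpow_one, Real.rpow_natCast, neg_mul]

lemma integral_pow_exp {c : ℝ} (hc : 0 < c) (m : ℕ) :
    ∫ x in Set.Ioi (0:ℝ), x^m * Real.exp (-(c*x))
      = (m.factorial : ℝ) / c^(m+1) := by
  have h := Real.integral_rpow_mul_exp_neg_mul_Ioi (a := (m:ℝ)+1) (r := c) (by positivity) hc
  rw [show ((m:ℝ)+1-1) = (m:ℝ) by ring] at h
  have hL : ∫ x in Set.Ioi (0:ℝ), x ^ ((m:ℝ)) * Real.exp (-(c*x))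
      = ∫ x in Set.Ioi (0:ℝ), x^m * Real.exp (-(c*x)) := by
    refine setIntegral_congr_fun measurableSet_Ioi fun x hx => ?_
    rw [Real.rpow_natCast]
  rw [hL] at h
  rw [h, Real.Gamma_nat_eq_factorial m]
  rw [show ((m:ℝ)+1) = ((m+1 : ℕ):ℝ) by push_cast; ring, Real.rpow_natCast]
  rw [div_pow, one_pow]
  ring

lemma prod_expand (m1 m2 α : ℕ) (a b : ℕ → ℝ) (c x : ℝ) :
    (∑ p ∈ range m1, a p * x^p) * (∑ q ∈ range m2, b q * x^q) * x^(α+1) * Real.exp (-(c*x))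
    = ∑ p ∈ range m1, ∑ q ∈ range m2,
        (a p * b q) * (x^(p+q+(α+1)) * Real.exp (-(c*x))) := by
  rw [Finset.sum_mul_sum, Finset.sum_mul, Finset.sum_mul]
  refine Finset.sum_congr rfl fun p _ => ?_
  rw [Finset.sum_mul, Finset.sum_mul]
  refine Finset.sum_congr rfl fun q _ => ?_
  rw [pow_add, pow_add]
  ring

lemma integral_main (α : ℕ) {c : ℝ} (hc : 0 < c) (j k : ℕ) :
    (∫ x in Set.Ioi (0:ℝ),
      (Lag j α (c*x) * deriv (fun y => Lag k α (c*y)) x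
        - deriv (fun y => Lag j α (c*y)) x * Lag k α (c*x))
      * x^(α+1) * Real.exp (-(c*x)))
    = (1/c)^(α+1) * (T α j k - T α k j) := by
  have hcne : c ≠ 0 := ne_of_gt hc
  -- the two pieces as explicit sums
  set F : ℕ → ℕ → ℝ → ℝ := fun j k x => ∑ p ∈ range (j+1), ∑ q ∈ range k,
    ((coef j α p * c^p) * (coef k α (q+1) * c^(q+1) * ((q:ℝ)+1)))
      * (x^(p+q+(α+1)) * Real.exp (-(c*x))) with hF
  have hpoint : ∀ (j k : ℕ) (x : ℝ),
      Lag j α (c*x) * deriv (fun y => Lag k α (c*y)) x * x^(α+1) * Real.exp (-(c*x))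
      = F j k x := by
    intro j k x
    rw [LagComp_eq, deriv_LagComp, hF]
    exact prod_expand (j+1) k α _ _ c x
  have hint : ∀ (j k : ℕ), IntegrableOn (F j k) (Set.Ioi (0:ℝ)) := by
    intro j k
    refine integrable_finset_sum _ fun p _ => ?_
    refine integrable_finset_sum _ fun q _ => ?_
    exact (integrableOn_pow_exp hc (p+q+(α+1))).const_mul _
  have hintval : ∀ (j k : ℕ), ∫ x in Set.Ioi (0:ℝ), F j k x = (1/c)^(α+1) * T α j k := by
    intro j k
    rw [hF]
    rw [integral_finset_sum _ (fun p _ => integrable_finset_sum _ fun q _ =>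
      (integrableOn_pow_exp hc (p+q+(α+1))).const_mul _)]
    have : ∀ p ∈ range (j+1),
        (∫ x in Set.Ioi (0:ℝ), ∑ q ∈ range k,
          ((coef j α p * c^p) * (coef k α (q+1) * c^(q+1) * ((q:ℝ)+1)))
            * (x^(p+q+(α+1)) * Real.exp (-(c*x))))
        = ∑ q ∈ range k, (1/c)^(α+1)
            * (coef j α p * coef k α (q+1) * ((q:ℝ)+1) * ((p+q+(α+1)).factorial : ℝ)) := by
      intro p _
      rw [integral_finset_sum _ (fun q _ => (integrableOn_pow_exp hc (p+q+(α+1))).const_mul _)]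
      refine Finset.sum_congr rfl fun q _ => ?_
      rw [MeasureTheory.integral_const_mul, integral_pow_exp hc]
      rw [div_eq_mul_inv, one_div, inv_pow]
      rw [show p+q+(α+1)+1 = p + ((q+1) + (α+1)) by omega, pow_add, pow_add, pow_add]
      have h1 : (c^p)⁻¹ * (c^p) = 1 := inv_mul_cancel₀ (by positivity)
      field_simp
      ring
    rw [Finset.sum_congr rfl this]
    unfold T
    rw [Finset.mul_sum]
    exact Finset.sum_congr rfl fun p _ => by rw [Finset.mul_sum]
  have hsplit : ∀ x : ℝ,
      (Lag j α (c*x) * deriv (fun y => Lag k α (c*y)) x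
        - deriv (fun y => Lag j α (c*y)) x * Lag k α (c*x))
      * x^(α+1) * Real.exp (-(c*x)) = F j k x - F k j x := by
    intro x
    rw [← hpoint j k x, ← hpoint k j x]
    ring
  rw [MeasureTheory.setIntegral_congr_fun measurableSet_Ioi (fun x _ => hsplit x)]
  rw [MeasureTheory.integral_sub (hint j k) (hint k j), hintval j k, hintval k j]
  ring

end LagAux

theorem stmt1 (M N : ℕ) (hN : 1 ≤ N) (hMN : N ≤ M) (j k : ℕ) :
    (∫ x in Set.Ioi (0:ℝ),
      (Lag j (2*(M-N)) (2*(M:ℝ)*x) * deriv (fun y => Lag k (2*(M-N)) (2*(M:ℝ)*y)) x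
        - deriv (fun y => Lag j (2*(M-N)) (2*(M:ℝ)*y)) x * Lag k (2*(M-N)) (2*(M:ℝ)*x))
      * x^(2*(M-N)+1) * Real.exp (-(2*(M:ℝ)*x))) =
    if j = k + 1 then
      (1/(2*(M:ℝ)))^(2*(M-N)+1) *
        ((Nat.factorial (j + 2*(M-N)) : ℝ) / (Nat.factorial (j-1) : ℝ))
    else if k = j + 1 then
      -((1/(2*(M:ℝ)))^(2*(M-N)+1) *
        ((Nat.factorial (k + 2*(M-N)) : ℝ) / (Nat.factorial (k-1) : ℝ)))
    else 0 := by
  have hM : 0 < M := by omega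
  have hMR : (0:ℝ) < (M:ℝ) := by exact_mod_cast hM
  have hc : (0:ℝ) < 2*(M:ℝ) := by linarith
  rw [LagAux.integral_main (2*(M-N)) hc j k, LagAux.T_diff]
  split_ifs <;> ring
end

section
/- Let M ≥ N ≥ 1 be integers, set α = 2(M−N), and let a > −1 be real. Then for every integer n ≥ 1: ∫_0^∞ ( e^{(a/(1+a))·2Mx} · (d/dx)L_n^{(α)}(2Mx) − (d/dx)e^{(a/(1+a))·2Mx} · L_n^{(α)}(2Mx) ) x^{2(M−N)+1} e^{−2Mx} dx = ((1+a)/(2M))^{2(M−N)+1} · ( (−a)^{n+1} (n+2(M−N)+1)!/n! − (−a)^{n−1} (n+2(M−N))!/(n−1)! ), and for n = 0 the same skew inner product equals −((1+a)/(2M))^{2(M−N)+1} · a · (2(M−N)+1)!. -/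
open MeasureTheory

namespace StmtAux

open Finset

lemma integrableOn_pow_exp (m : ℕ) {r : ℝ} (hr : 0 < r) :
    IntegrableOn (fun x : ℝ => x ^ m * Real.exp (-(r * x))) (Set.Ioi 0) := by
  have h := integrableOn_rpow_mul_exp_neg_mul_rpow (s := (m:ℝ)) (p := 1) (b := r)
      (by exact lt_of_lt_of_le (by norm_num) (Nat.cast_nonneg m)) one_pos hr
  refine h.congr_fun (fun x hx => ?_) measurableSet_Ioi
  beta_reduce
  rw [Real.rpow_natCast, Real.rpow_one, neg_mul]

lemma integral_pow_exp (m : ℕ) {r : ℝ} (hr : 0 < r) :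
    ∫ x in Set.Ioi (0:ℝ), x ^ m * Real.exp (-(r * x)) = (m.factorial : ℝ) / r ^ (m+1) := by
  have h := Real.integral_rpow_mul_exp_neg_mul_Ioi (a := (m:ℝ)+1) (by positivity) hr
  have he : ∀ t : ℝ, t ^ ((m:ℝ)+1-1) = t ^ m := by
    intro t; rw [add_sub_cancel_right, Real.rpow_natCast]
  simp_rw [he] at h
  rw [h, Real.Gamma_nat_eq_factorial]
  have : ((1:ℝ)/r) ^ ((m:ℝ)+1) = (1/r) ^ (m+1 : ℕ) := by
    rw [← Real.rpow_natCast (1/r) (m+1)]; norm_num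
  rw [this, one_div, inv_pow]
  ring

lemma lagFun_eq (n α : ℕ) (β : ℝ) :
    (fun y => Lag n α (β * y)) = fun y => ∑ k ∈ range (n+1),
      ((-1:ℝ)^k * ((n+α).choose (n-k) : ℝ) * β^k / (k.factorial : ℝ)) * y^k := by
  funext y
  unfold Lag
  refine Finset.sum_congr rfl fun k _ => ?_
  rw [mul_pow]; ring

lemma lag_hasDerivAt (n α : ℕ) (β x : ℝ) :
    HasDerivAt (fun y => Lag n α (β * y))
      (∑ k ∈ range (n+1),
        ((-1:ℝ)^k * ((n+α).choose (n-k) : ℝ) * β^k / (k.factorial : ℝ)) * ((k:ℝ) * x^(k-1))) x := by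
  rw [lagFun_eq]
  exact HasDerivAt.fun_sum fun k _ => (hasDerivAt_pow k x).const_mul _

lemma exp_hasDerivAt (c β x : ℝ) :
    HasDerivAt (fun y => Real.exp (c * (β * y))) (Real.exp (c * (β * x)) * (c * β)) x := by
  have h : HasDerivAt (fun y : ℝ => c * (β * y)) (c * β) x := by
    simpa using ((hasDerivAt_id x).const_mul β).const_mul c
  exact h.exp

lemma binom0 (n : ℕ) (b : ℝ) :
    ∑ k ∈ range (n+1), ((n.choose k : ℕ) : ℝ) * b^k = (1+b)^n := by
  rw [add_comm (1:ℝ) b, add_pow]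
  exact Finset.sum_congr rfl fun k _ => by rw [one_pow]; ring

lemma binom1 (m : ℕ) (b : ℝ) :
    ∑ k ∈ range (m+1+1), (k : ℝ) * (((m+1).choose k : ℕ) : ℝ) * b^k
      = ((m:ℝ)+1) * b * (1+b)^m := by
  rw [Finset.sum_range_succ']
  have h : ∀ j ∈ range (m+1), ((j+1 : ℕ) : ℝ) * (((m+1).choose (j+1) : ℕ) : ℝ) * b^(j+1)
      = (((m:ℝ)+1) * b) * (((m.choose j : ℕ) : ℝ) * b^j) := by
    intro j _
    have h' : (((m+1).choose (j+1) : ℕ) : ℝ) * ((j:ℝ)+1) = ((m:ℝ)+1) * ((m.choose j : ℕ) : ℝ) := by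
      exact_mod_cast congrArg (Nat.cast : ℕ → ℝ) (Nat.add_one_mul_choose_eq m j).symm
    rw [pow_succ]
    push_cast
    linear_combination b^j * b * h'
  rw [Finset.sum_congr rfl h, ← Finset.mul_sum, binom0]
  simp

lemma core (α n : ℕ) {β a : ℝ} (hβ : 0 < β) (ha : -1 < a) :
    (∫ x in Set.Ioi (0:ℝ),
      (Real.exp (a/(1+a) * (β*x)) * deriv (fun y => Lag n α (β*y)) x
        - deriv (fun y => Real.exp (a/(1+a) * (β*y))) x * Lag n α (β*x))
      * x^(α+1) * Real.exp (-(β*x))) =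
    ∑ k ∈ range (n+1),
      ((-1:ℝ)^k * ((n+α).choose (n-k) : ℝ) * β^k / (k.factorial : ℝ)) *
        ((k:ℝ) * (((k+α).factorial : ℝ) / (β/(1+a))^(k+α+1))
          - (a/(1+a)*β) * (((k+α+1).factorial : ℝ) / (β/(1+a))^(k+α+2))) := by
  have h1a : (0:ℝ) < 1 + a := by linarith
  set c := a/(1+a) with hc
  set l := β/(1+a) with hl
  have hlpos : 0 < l := div_pos hβ h1a
  set d : ℕ → ℝ := fun k => (-1:ℝ)^k * ((n+α).choose (n-k) : ℝ) * β^k / (k.factorial : ℝ) with hd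
  have key : ∀ x : ℝ,
      (Real.exp (c * (β*x)) * deriv (fun y => Lag n α (β*y)) x
        - deriv (fun y => Real.exp (c * (β*y))) x * Lag n α (β*x)) * x^(α+1) * Real.exp (-(β*x))
      = ∑ k ∈ range (n+1), d k * ((k:ℝ) * (x^(k+α) * Real.exp (-(l*x)))
          - (c*β) * (x^(k+α+1) * Real.exp (-(l*x)))) := by
    intro x
    rw [(lag_hasDerivAt n α β x).deriv, (exp_hasDerivAt c β x).deriv]
    have hL : Lag n α (β*x) = ∑ k ∈ range (n+1), d k * x^k := congrFun (lagFun_eq n α β) x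
    rw [hL, Finset.mul_sum, Finset.mul_sum, ← Finset.sum_sub_distrib, Finset.sum_mul,
      Finset.sum_mul]
    refine Finset.sum_congr rfl fun k _ => ?_
    have hexp : Real.exp (c * (β*x)) * Real.exp (-(β*x)) = Real.exp (-(l*x)) := by
      rw [← Real.exp_add]
      congr 1
      rw [hl, hc]
      field_simp
      ring
    rw [← hexp]
    cases k with
    | zero => simp; ring
    | succ j => simp only [Nat.add_sub_cancel]; push_cast; ring
  have hint : ∀ k ∈ range (n+1), Integrable
      (fun x : ℝ => d k * ((k:ℝ) * (x^(k+α) * Real.exp (-(l*x)))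
          - (c*β) * (x^(k+α+1) * Real.exp (-(l*x)))))
      (volume.restrict (Set.Ioi 0)) := fun k _ =>
    ((((integrableOn_pow_exp (k+α) hlpos).const_mul ((k:ℝ))).sub
      ((integrableOn_pow_exp (k+α+1) hlpos).const_mul (c*β))).const_mul (d k))
  calc (∫ x in Set.Ioi (0:ℝ),
      (Real.exp (c * (β*x)) * deriv (fun y => Lag n α (β*y)) x
        - deriv (fun y => Real.exp (c * (β*y))) x * Lag n α (β*x)) * x^(α+1) * Real.exp (-(β*x)))
      = ∫ x in Set.Ioi (0:ℝ), ∑ k ∈ range (n+1), d k * ((k:ℝ) * (x^(k+α) * Real.exp (-(l*x)))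
          - (c*β) * (x^(k+α+1) * Real.exp (-(l*x)))) :=
        setIntegral_congr_fun measurableSet_Ioi fun x _ => key x
    _ = ∑ k ∈ range (n+1), ∫ x in Set.Ioi (0:ℝ), d k * ((k:ℝ) * (x^(k+α) * Real.exp (-(l*x)))
          - (c*β) * (x^(k+α+1) * Real.exp (-(l*x)))) := integral_finset_sum _ hint
    _ = _ := by
        refine Finset.sum_congr rfl fun k _ => ?_
        rw [integral_const_mul, integral_sub
            (((integrableOn_pow_exp (k+α) hlpos).const_mul ((k:ℝ))))
            (((integrableOn_pow_exp (k+α+1) hlpos).const_mul (c*β))),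
          integral_const_mul, integral_const_mul, integral_pow_exp (k+α) hlpos,
          integral_pow_exp (k+α+1) hlpos]

lemma termEq (α n k : ℕ) (hk : k ≤ n) {β a : ℝ} (hβ : 0 < β) (h1a : (0:ℝ) < 1+a) :
    ((-1:ℝ)^k * ((n+α).choose (n-k) : ℝ) * β^k / (k.factorial : ℝ)) *
        ((k:ℝ) * (((k+α).factorial : ℝ) / (β/(1+a))^(k+α+1))
          - (a/(1+a)*β) * (((k+α+1).factorial : ℝ) / (β/(1+a))^(k+α+2)))
    = ((1+a)/β)^(α+1) * (((n+α).factorial : ℝ)/(n.factorial : ℝ)) *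
        ((n.choose k : ℝ) * (-(1+a))^k * ((k:ℝ) - a*((k:ℝ)+(α:ℝ)+1))) := by
  have hβ' : β ≠ 0 := ne_of_gt hβ
  have h1a' : (1:ℝ)+a ≠ 0 := ne_of_gt h1a
  have hfk : (k.factorial : ℝ) ≠ 0 := Nat.cast_ne_zero.mpr k.factorial_ne_zero
  have hfnk : ((n-k).factorial : ℝ) ≠ 0 := Nat.cast_ne_zero.mpr (n-k).factorial_ne_zero
  have hfka : ((k+α).factorial : ℝ) ≠ 0 := Nat.cast_ne_zero.mpr (k+α).factorial_ne_zero
  have hfn : (n.factorial : ℝ) ≠ 0 := Nat.cast_ne_zero.mpr n.factorial_ne_zero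
  have hch1 : ((n+α).choose (n-k) : ℝ)
      = ((n+α).factorial : ℝ) / (((n-k).factorial : ℝ) * ((k+α).factorial : ℝ)) := by
    have h := Nat.choose_mul_factorial_mul_factorial (show n-k ≤ n+α by omega)
    have h2 : n + α - (n - k) = k + α := by omega
    rw [h2] at h
    field_simp
    exact_mod_cast h
  have hch2 : (n.choose k : ℝ)
      = (n.factorial : ℝ) / ((k.factorial : ℝ) * ((n-k).factorial : ℝ)) := by
    have h := Nat.choose_mul_factorial_mul_factorial hk
    field_simp
    exact_mod_cast h
  have hfac : ((k+α+1).factorial : ℝ) = ((k:ℝ)+(α:ℝ)+1) * ((k+α).factorial : ℝ) := by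
    rw [Nat.factorial_succ]; push_cast; ring
  rw [hch1, hch2, hfac, div_pow, div_pow, div_pow, neg_pow]
  field_simp
  rw [neg_pow (1+a)]
  ring

lemma sumEq (α m : ℕ) (a : ℝ) :
    ∑ k ∈ range (m+1+1), (((m+1).choose k : ℕ) : ℝ) * (-(1+a))^k * ((k:ℝ) - a*((k:ℝ)+(α:ℝ)+1))
    = (1-a) * (((m:ℝ)+1) * (-(1+a)) * (1+(-(1+a)))^m)
      - a*((α:ℝ)+1) * (1+(-(1+a)))^(m+1) := by
  set b : ℝ := -(1+a) with hb
  calc ∑ k ∈ range (m+1+1), (((m+1).choose k : ℕ) : ℝ) * b^k * ((k:ℝ) - a*((k:ℝ)+(α:ℝ)+1))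
      = ∑ k ∈ range (m+1+1), ((1-a) * ((k:ℝ) * (((m+1).choose k : ℕ) : ℝ) * b^k)
          - (a*((α:ℝ)+1)) * ((((m+1).choose k : ℕ) : ℝ) * b^k)) :=
        Finset.sum_congr rfl fun k _ => by ring
    _ = _ := by
        rw [Finset.sum_sub_distrib, ← Finset.mul_sum, ← Finset.mul_sum, binom0, binom1]

lemma finalEq (α m : ℕ) {β a : ℝ} (hβ : β ≠ 0) :
    ((1+a)/β)^(α+1) * (((m+1+α).factorial : ℝ)/((m+1).factorial : ℝ)) *
      ((1-a) * (((m:ℝ)+1) * (-(1+a)) * (1+(-(1+a)))^m)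
        - a*((α:ℝ)+1) * (1+(-(1+a)))^(m+1))
    = ((1+a)/β)^(α+1) *
        ((-a)^(m+1+1) * (((m+1+α+1).factorial : ℝ) / ((m+1).factorial : ℝ))
          - (-a)^m * (((m+1+α).factorial : ℝ) / ((m).factorial : ℝ))) := by
  have h1 : ((m+1).factorial : ℝ) = ((m:ℝ)+1) * (m.factorial : ℝ) := by
    rw [Nat.factorial_succ]; push_cast; ring
  have h2 : ((m+1+α+1).factorial : ℝ) = ((m:ℝ)+1+(α:ℝ)+1) * ((m+1+α).factorial : ℝ) := by
    rw [Nat.factorial_succ]; push_cast; ring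
  have hm : (m.factorial : ℝ) ≠ 0 := Nat.cast_ne_zero.mpr m.factorial_ne_zero
  have h1' : (1 + -(1+a)) = -a := by ring
  rw [h1, h2, h1']
  have hm1 : ((m:ℝ)+1) ≠ 0 := by positivity
  field_simp
  ring

end StmtAux

theorem stmt2 (M N : ℕ) (hN : 1 ≤ N) (hMN : N ≤ M) (a : ℝ) (ha : -1 < a) :
    (∀ n : ℕ, 1 ≤ n →
      (∫ x in Set.Ioi (0:ℝ),
        (Real.exp (a/(1+a) * (2*(M:ℝ)*x)) * deriv (fun y => Lag n (2*(M-N)) (2*(M:ℝ)*y)) x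
          - deriv (fun y => Real.exp (a/(1+a) * (2*(M:ℝ)*y))) x * Lag n (2*(M-N)) (2*(M:ℝ)*x))
        * x^(2*(M-N)+1) * Real.exp (-(2*(M:ℝ)*x))) =
      ((1+a)/(2*(M:ℝ)))^(2*(M-N)+1) *
        ((-a)^(n+1) * ((Nat.factorial (n + 2*(M-N) + 1) : ℝ) / (Nat.factorial n : ℝ))
          - (-a)^(n-1) * ((Nat.factorial (n + 2*(M-N)) : ℝ) / (Nat.factorial (n-1) : ℝ)))) ∧
    (∫ x in Set.Ioi (0:ℝ),
        (Real.exp (a/(1+a) * (2*(M:ℝ)*x)) * deriv (fun y => Lag 0 (2*(M-N)) (2*(M:ℝ)*y)) x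
          - deriv (fun y => Real.exp (a/(1+a) * (2*(M:ℝ)*y))) x * Lag 0 (2*(M-N)) (2*(M:ℝ)*x))
        * x^(2*(M-N)+1) * Real.exp (-(2*(M:ℝ)*x))) =
      -(((1+a)/(2*(M:ℝ)))^(2*(M-N)+1) * a * (Nat.factorial (2*(M-N)+1) : ℝ)) := by
  have hM : 1 ≤ M := le_trans hN hMN
  have hM' : (1:ℝ) ≤ (M:ℝ) := by exact_mod_cast hM
  have hβ : (0:ℝ) < 2*(M:ℝ) := by linarith
  have h1a : (0:ℝ) < 1+a := by linarith
  constructor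
  · intro n hn
    obtain ⟨m, rfl⟩ : ∃ m, n = m + 1 := ⟨n-1, by omega⟩
    rw [StmtAux.core (2*(M-N)) (m+1) hβ ha]
    rw [Finset.sum_congr rfl (fun k hk => StmtAux.termEq (2*(M-N)) (m+1) k
      (Nat.lt_succ_iff.mp (Finset.mem_range.mp hk)) hβ h1a)]
    rw [← Finset.mul_sum, StmtAux.sumEq, StmtAux.finalEq (2*(M-N)) m (ne_of_gt hβ)]
    norm_num
  · rw [StmtAux.core (2*(M-N)) 0 hβ ha]
    rw [Finset.sum_range_one]
    have h1a' : (1:ℝ)+a ≠ 0 := ne_of_gt h1a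
    have hβ' : (2*(M:ℝ)) ≠ 0 := ne_of_gt hβ
    simp only [pow_zero, Nat.sub_zero, Nat.zero_add, Nat.choose_zero_right, Nat.cast_zero,
      zero_mul, zero_sub]
    simp only [div_pow]
    field_simp
    ring
end

section
/- Let M ≥ N ≥ 1 be integers, set α = 2(M−N), and for 0 ≤ j ≤ N−1 define φ_{2j}(x) = ∑_{k=0}^j ( ∏_{i=1}^k (2i−1)/(2i+α) ) · L_{2k}^{(α)}(2Mx) and ψ_{2j}(x) = φ_{2j}(x) · x^{M−N+1/2} e^{−Mx}. Then for every x > 0: ψ_{2j}′(x) = (1/2) · ( ∏_{k=1}^j (2k−1)/(2k+α) ) · (2j+1) · L_{2j+1}^{(α)}(2Mx) · x^{M−N−1/2} e^{−Mx}. -/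
open MeasureTheory

noncomputable def LagD (n α : ℕ) (x : ℝ) : ℝ :=
  ∑ k ∈ Finset.range (n+1),
    (-1:ℝ)^k * (Nat.choose (n+α) (n-k) : ℝ) * ((k:ℝ) * x^(k-1)) / (Nat.factorial k : ℝ)

lemma hasDerivAt_Lag (n α : ℕ) (t : ℝ) : HasDerivAt (fun x => Lag n α x) (LagD n α t) t := by
  unfold Lag LagD
  apply HasDerivAt.fun_sum
  intro k _
  have h := (((hasDerivAt_pow k t).const_mul ((-1:ℝ)^k * (Nat.choose (n+α) (n-k) : ℝ))).div_const
    ((Nat.factorial k : ℝ)))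
  convert h using 2 <;> ring

-- padded representation of Lag
lemma lag_pad (α K R : ℕ) (h : K < R) (t : ℝ) :
    Lag K α t = ∑ m ∈ Finset.range R,
      (if m ≤ K then (-1:ℝ)^m * (Nat.choose (K+α) (K-m) : ℝ) / (Nat.factorial m : ℝ) else 0) * t^m := by
  rw [← Finset.sum_subset (Finset.range_subset_range.2 h)]
  · unfold Lag
    apply Finset.sum_congr rfl
    intro m hm
    rw [if_pos (by simpa [Nat.lt_succ_iff] using hm)]
    ring
  · intro m _ hm
    rw [if_neg (by simpa [Nat.lt_succ_iff] using hm), zero_mul]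

lemma lag_shift (α K R : ℕ) (h : K + 1 < R) (t : ℝ) :
    t * Lag K α t = ∑ m ∈ Finset.range R,
      (if 1 ≤ m ∧ m ≤ K+1 then (-1:ℝ)^(m-1) * (Nat.choose (K+α) (K-(m-1)) : ℝ) / (Nat.factorial (m-1) : ℝ) else 0) * t^m := by
  rw [← Finset.sum_subset (Finset.range_subset_range.2 h)]
  · rw [Finset.sum_range_succ']
    simp only [Nat.add_sub_cancel, pow_zero, mul_one]
    rw [if_neg (by omega)]
    unfold Lag
    rw [Finset.mul_sum]
    rw [add_zero]
    apply Finset.sum_congr rfl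
    intro m hm
    rw [if_pos (by simp at hm; omega)]
    rw [pow_succ]
    ring
  · intro m _ hm
    rw [if_neg (by simp at hm; omega), zero_mul]

lemma lagD_rep (α K R : ℕ) (h : K < R) (t : ℝ) :
    t * LagD K α t = ∑ m ∈ Finset.range R,
      (if m ≤ K then (m:ℝ) * ((-1:ℝ)^m * (Nat.choose (K+α) (K-m) : ℝ) / (Nat.factorial m : ℝ)) else 0) * t^m := by
  rw [← Finset.sum_subset (Finset.range_subset_range.2 h)]
  · unfold LagD
    rw [Finset.mul_sum]
    apply Finset.sum_congr rfl
    intro m hm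
    rw [if_pos (by simpa [Nat.lt_succ_iff] using hm)]
    cases m with
    | zero => simp
    | succ p => simp only [Nat.add_sub_cancel]; rw [pow_succ]; ring
  · intro m _ hm
    rw [if_neg (by simpa [Nat.lt_succ_iff] using hm), zero_mul]


lemma natkey (α n m : ℕ) (h : m ≤ n) :
    (2*m+α+1) * Nat.choose (n+1+α) (n+1-m) + m * Nat.choose (n+1+α) (n+2-m)
      + (n+1+α) * Nat.choose (n+α) (n-m)
    = (n+2) * Nat.choose (n+2+α) (n+2-m) := by
  obtain ⟨k, rfl⟩ : ∃ k, n = m + k := ⟨n - m, by omega⟩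
  rw [show m+k+1-m = k+1 by omega, show m+k+2-m = k+2 by omega, show m+k-m = k by omega,
    show m+k+1+α = m+k+α+1 by ring, show m+k+2+α = (m+k+α+1)+1 by ring]
  have hp : Nat.choose (m+k+α+1+1) (k+2) = Nat.choose (m+k+α+1) (k+1) + Nat.choose (m+k+α+1) (k+2) :=
    Nat.choose_succ_succ (m+k+α+1) (k+1)
  have h1 : (m+k+α+1) * Nat.choose (m+k+α) k = Nat.choose (m+k+α+1) (k+1) * (k+1) :=
    Nat.add_one_mul_choose_eq (m+k+α) k
  have h2 : Nat.choose (m+k+α+1) (k+2) * (k+2) = Nat.choose (m+k+α+1) (k+1) * (m+k+α+1 - (k+1)) :=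
    Nat.choose_succ_right_eq (m+k+α+1) (k+1)
  rw [show m+k+α+1 - (k+1) = m + α by omega] at h2
  rw [hp]
  nlinarith [h1, h2]

lemma key (α n : ℕ) (t : ℝ) :
    2*t*LagD (n+1) α t + ((α:ℝ)+1-t) * Lag (n+1) α t
      = ((n:ℝ)+2) * Lag (n+2) α t - ((n:ℝ)+1+(α:ℝ)) * Lag n α t := by
  have hD := lagD_rep α (n+1) (n+3) (by omega) t
  have hS := lag_shift α (n+1) (n+3) (by omega) t
  have h1 := lag_pad α (n+1) (n+3) (by omega) t
  have h2 := lag_pad α (n+2) (n+3) (by omega) t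
  have h0 := lag_pad α n (n+3) (by omega) t
  have lhs : 2*t*LagD (n+1) α t + ((α:ℝ)+1-t) * Lag (n+1) α t
      = 2*(t*LagD (n+1) α t) + ((α:ℝ)+1) * Lag (n+1) α t - t * Lag (n+1) α t := by ring
  rw [lhs, hD, hS, h1, h2, h0, Finset.mul_sum, Finset.mul_sum, Finset.mul_sum, Finset.mul_sum,
    ← Finset.sum_sub_distrib, ← Finset.sum_add_distrib, ← Finset.sum_sub_distrib]
  apply Finset.sum_congr rfl
  intro m hm
  simp only [Finset.mem_range] at hm
  have hc2 : m ≤ n + 2 := by omega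
  rcases Nat.lt_or_ge m (n+1) with hmn | hmn
  · -- m ≤ n
    have hle : m ≤ n := by omega
    have hc1 : m ≤ n + 1 := by omega
    have hkey : (((2*m+α+1) * Nat.choose (n+1+α) (n+1-m) + m * Nat.choose (n+1+α) (n+2-m)
      + (n+1+α) * Nat.choose (n+α) (n-m) : ℕ) : ℝ)
      = ((n+2) * Nat.choose (n+2+α) (n+2-m) : ℕ) := by exact_mod_cast congrArg Nat.cast (natkey α n m hle)
    push_cast at hkey
    simp only [if_pos hc1, if_pos hc2, if_pos hle]
    rcases Nat.eq_zero_or_pos m with rfl | hm1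
    · rw [if_neg (by omega)]
      simp only [Nat.sub_zero, pow_zero, Nat.factorial_zero, Nat.cast_zero, Nat.cast_one] at hkey ⊢
      linear_combination hkey
    · obtain ⟨p, rfl⟩ : ∃ p, m = p + 1 := ⟨m - 1, by omega⟩
      rw [if_pos (by omega)]
      simp only [Nat.add_sub_cancel]
      rw [show n+2-(p+1) = n+1-p by omega] at hkey
      have hfac : (Nat.factorial (p+1) : ℝ) = ((p:ℝ)+1) * (Nat.factorial p : ℝ) := by
        push_cast [Nat.factorial_succ]; ring
      have hfp : (Nat.factorial p : ℝ) ≠ 0 := Nat.cast_ne_zero.2 p.factorial_ne_zero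
      have hfp1 : ((p:ℝ)+1) ≠ 0 := by positivity
      rw [hfac]
      push_cast at hkey ⊢
      field_simp
      linear_combination (-1:ℝ)^(p+1) * t^(p+1) * hkey
  · rcases Nat.lt_or_ge m (n+2) with hmn2 | hmn3
    · obtain rfl : m = n+1 := by omega
      simp only [if_pos (show n+1 ≤ n+1 from le_refl _), if_pos (show n+1 ≤ n+2 by omega),
        if_pos (show 1 ≤ n+1 ∧ n+1 ≤ n+1+1 by omega), if_neg (show ¬ (n+1 ≤ n) by omega)]
      simp only [Nat.add_sub_cancel, Nat.sub_self, Nat.choose_zero_right,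
        show n+1-n = 1 by omega, show n+2-(n+1) = 1 by omega, Nat.choose_one_right]
      have hfac : (Nat.factorial (n+1) : ℝ) = ((n:ℝ)+1) * (Nat.factorial n : ℝ) := by
        push_cast [Nat.factorial_succ]; ring
      rw [hfac]
      have h1 : (Nat.factorial n : ℝ) ≠ 0 := Nat.cast_ne_zero.2 n.factorial_ne_zero
      have h2 : ((n:ℝ)+1) ≠ 0 := by positivity
      push_cast
      field_simp
      ring
    · obtain rfl : m = n+2 := by omega
      simp only [if_neg (show ¬ (n+2 ≤ n+1) by omega), if_pos (show n+2 ≤ n+2 from le_refl _),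
        if_pos (show 1 ≤ n+2 ∧ n+2 ≤ n+1+1 by omega), if_neg (show ¬ (n+2 ≤ n) by omega)]
      simp only [Nat.add_sub_cancel, Nat.sub_self, Nat.choose_zero_right,
        show n+1-(n+1) = 0 by omega]
      have hfac : (Nat.factorial (n+2) : ℝ) = ((n:ℝ)+2) * (Nat.factorial (n+1) : ℝ) := by
        push_cast [Nat.factorial_succ]; ring
      rw [hfac]
      have h1 : (Nat.factorial (n+1) : ℝ) ≠ 0 := Nat.cast_ne_zero.2 (n+1).factorial_ne_zero
      have h2 : ((n:ℝ)+2) ≠ 0 := by positivity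
      push_cast
      simp only [Nat.sub_self, Nat.choose_zero_right, Nat.cast_one]
      field_simp
      ring

lemma tele (α : ℕ) (t : ℝ) (j : ℕ) :
    ∑ k ∈ Finset.range (j+1), (∏ i ∈ Finset.Icc 1 k, ((2*(i:ℝ) - 1)/(2*(i:ℝ) + (α:ℝ)))) *
      (2*t*LagD (2*k) α t + ((α:ℝ)+1-t) * Lag (2*k) α t)
    = (∏ k ∈ Finset.Icc 1 j, ((2*(k:ℝ) - 1)/(2*(k:ℝ) + (α:ℝ)))) * (2*(j:ℝ)+1) * Lag (2*j+1) α t := by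
  induction j with
  | zero =>
    simp only [Finset.sum_range_one, Nat.mul_zero, Nat.cast_zero]
    norm_num [Lag, LagD, Finset.sum_range_succ]
    ring
  | succ j ih =>
    rw [Finset.sum_range_succ, ih]
    have hkey := key α (2*j+1) t
    rw [show 2*j+1+1 = 2*(j+1) by ring, show 2*j+1+2 = 2*(j+1)+1 by ring] at hkey
    have hden : 2*((j:ℝ)+1) + (α:ℝ) ≠ 0 := by positivity
    have hc : (∏ i ∈ Finset.Icc 1 (j+1), ((2*(i:ℝ) - 1)/(2*(i:ℝ) + (α:ℝ)))) * (2*((j:ℝ)+1) + (α:ℝ))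
        = (∏ i ∈ Finset.Icc 1 j, ((2*(i:ℝ) - 1)/(2*(i:ℝ) + (α:ℝ)))) * (2*(j:ℝ)+1) := by
      rw [Finset.prod_Icc_succ_top (Nat.le_add_left 1 j)]
      push_cast
      rw [mul_assoc, div_mul_cancel₀ _ hden]
      ring
    push_cast at hkey ⊢
    linear_combination (∏ i ∈ Finset.Icc 1 (j+1), ((2*(i:ℝ) - 1)/(2*(i:ℝ) + (α:ℝ)))) * hkey
      - (Lag (2*j+1) α t) * hc


theorem stmt3 (M N : ℕ) (hN : 1 ≤ N) (hMN : N ≤ M) (j : ℕ) (hj : j ≤ N - 1)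
    (x : ℝ) (hx : 0 < x) :
    deriv (fun y : ℝ =>
      (∑ k ∈ Finset.range (j+1),
        (∏ i ∈ Finset.Icc 1 k, ((2*(i:ℝ) - 1)/(2*(i:ℝ) + ((2*(M-N) : ℕ) : ℝ)))) *
          Lag (2*k) (2*(M-N)) (2*(M:ℝ)*y)) *
      y ^ ((M:ℝ) - (N:ℝ) + 1/2) * Real.exp (-(M:ℝ)*y)) x =
    (1/2) * (∏ k ∈ Finset.Icc 1 j, ((2*(k:ℝ) - 1)/(2*(k:ℝ) + ((2*(M-N) : ℕ) : ℝ)))) *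
      (2*(j:ℝ) + 1) * Lag (2*j+1) (2*(M-N)) (2*(M:ℝ)*x) *
      x ^ ((M:ℝ) - (N:ℝ) - 1/2) * Real.exp (-(M:ℝ)*x) := by
  set α : ℕ := 2*(M-N) with hα
  set r : ℝ := (M:ℝ) - (N:ℝ) + 1/2 with hr
  have hαR : ((α:ℕ):ℝ) = 2*((M:ℝ) - (N:ℝ)) := by
    rw [hα]; push_cast [hMN]; ring
  have hlin : HasDerivAt (fun y : ℝ => 2*(M:ℝ)*y) (2*(M:ℝ)) x := by
    simpa using (hasDerivAt_id x).const_mul (2*(M:ℝ))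
  have hS : HasDerivAt (fun y : ℝ => ∑ k ∈ Finset.range (j+1),
      (∏ i ∈ Finset.Icc 1 k, ((2*(i:ℝ) - 1)/(2*(i:ℝ) + ((α:ℕ):ℝ)))) * Lag (2*k) α (2*(M:ℝ)*y))
      (∑ k ∈ Finset.range (j+1),
      (∏ i ∈ Finset.Icc 1 k, ((2*(i:ℝ) - 1)/(2*(i:ℝ) + ((α:ℕ):ℝ)))) * (LagD (2*k) α (2*(M:ℝ)*x) * (2*(M:ℝ)))) x := by
    apply HasDerivAt.fun_sum
    intro k _
    exact ((hasDerivAt_Lag (2*k) α (2*(M:ℝ)*x)).comp x hlin).const_mul _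
  have hpow : HasDerivAt (fun y : ℝ => y ^ r) (r * x ^ (r - 1)) x :=
    Real.hasDerivAt_rpow_const (Or.inl hx.ne')
  have hexp : HasDerivAt (fun y : ℝ => Real.exp (-(M:ℝ)*y)) (Real.exp (-(M:ℝ)*x) * (-(M:ℝ))) x := by
    have h1 : HasDerivAt (fun y : ℝ => -(M:ℝ)*y) (-(M:ℝ)) x := by
      simpa using (hasDerivAt_id x).const_mul (-(M:ℝ))
    exact (Real.hasDerivAt_exp (-(M:ℝ)*x)).comp x h1
  have htot := (hS.fun_mul hpow).fun_mul hexp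
  rw [htot.deriv]
  -- abbreviations
  have hTel := tele α (2*(M:ℝ)*x) j
  have hr1 : r - 1 + 1 = r := by ring
  have hxr : x ^ r = x ^ (r - 1) * x := by
    conv_lhs => rw [← hr1]
    exact Real.rpow_add_one hx.ne' _
  have hgoalexp : (M:ℝ) - (N:ℝ) - 1/2 = r - 1 := by rw [hr]; ring
  rw [hgoalexp, hxr]
  have hP : (∑ k ∈ Finset.range (j+1),
      (∏ i ∈ Finset.Icc 1 k, ((2*(i:ℝ) - 1)/(2*(i:ℝ) + ((α:ℕ):ℝ)))) * (LagD (2*k) α (2*(M:ℝ)*x) * (2*(M:ℝ))))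
      = 2*(M:ℝ) * ∑ k ∈ Finset.range (j+1),
      (∏ i ∈ Finset.Icc 1 k, ((2*(i:ℝ) - 1)/(2*(i:ℝ) + ((α:ℕ):ℝ)))) * LagD (2*k) α (2*(M:ℝ)*x) := by
    rw [Finset.mul_sum]
    exact Finset.sum_congr rfl fun k _ => by ring
  have hQ : (∑ k ∈ Finset.range (j+1),
      (∏ i ∈ Finset.Icc 1 k, ((2*(i:ℝ) - 1)/(2*(i:ℝ) + ((α:ℕ):ℝ)))) *
        (2*(2*(M:ℝ)*x)*LagD (2*k) α (2*(M:ℝ)*x) + (((α:ℕ):ℝ)+1-(2*(M:ℝ)*x)) * Lag (2*k) α (2*(M:ℝ)*x)))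
      = 2*(2*(M:ℝ)*x) * (∑ k ∈ Finset.range (j+1),
          (∏ i ∈ Finset.Icc 1 k, ((2*(i:ℝ) - 1)/(2*(i:ℝ) + ((α:ℕ):ℝ)))) * LagD (2*k) α (2*(M:ℝ)*x))
        + (((α:ℕ):ℝ)+1-(2*(M:ℝ)*x)) * (∑ k ∈ Finset.range (j+1),
          (∏ i ∈ Finset.Icc 1 k, ((2*(i:ℝ) - 1)/(2*(i:ℝ) + ((α:ℕ):ℝ)))) * Lag (2*k) α (2*(M:ℝ)*x)) := by
    rw [Finset.mul_sum, Finset.mul_sum, ← Finset.sum_add_distrib]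
    exact Finset.sum_congr rfl fun k _ => by ring
  rw [hQ] at hTel
  rw [hP]
  linear_combination (x ^ (r-1) * Real.exp (-(M:ℝ)*x) / 2) * hTel
    - ((∑ k ∈ Finset.range (j+1),
          (∏ i ∈ Finset.Icc 1 k, ((2*(i:ℝ) - 1)/(2*(i:ℝ) + ((α:ℕ):ℝ)))) * Lag (2*k) α (2*(M:ℝ)*x))
        * x ^ (r-1) * Real.exp (-(M:ℝ)*x) / 2) * hαR
end

section
/- Let M ≥ N ≥ 1 be integers, set α = 2(M−N), let a > −1 be real, and define φ_{2N−1}(y) = e^{(a/(1+a))·2My} − (1+a)^{α+1} ∑_{j=0}^{2N−2} (−a)^j L_j^{(α)}(2My). Then for every real y and every circle C centered at 0 with radius r satisfying |a|/(1+a) < r, traversed once counterclockwise: φ_{2N−1}(y) = −(1+a)^{α+1} a^{2N−1} · (1/(2πi)) ∮_C e^{−2Myz} · ((z+1)^{2M} / z^{2N}) · ( z / ( ((a+1)z+a)(z+1) ) ) dz. -/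
open MeasureTheory

open Metric Set Complex Finset in
lemma polyId (p : ℕ) (a z : ℂ) : ∀ q : ℕ,
    (-a)^q * (1+z)^(q+p) =
      (1+z)^p * z^q - ∑ j ∈ Finset.range q,
        ((-a)^j * (1+z)^(j+p) * z^(q-1-j) * ((a+1)*z + a)) := by
  intro q
  induction q with
  | zero => simp
  | succ q ih =>
    rw [Finset.sum_range_succ]
    have hcg : ∑ j ∈ Finset.range q, ((-a)^j * (1+z)^(j+p) * z^(q+1-1-j) * ((a+1)*z + a))
        = z * ∑ j ∈ Finset.range q, ((-a)^j * (1+z)^(j+p) * z^(q-1-j) * ((a+1)*z + a)) := by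
      rw [Finset.mul_sum]
      refine Finset.sum_congr rfl fun j hj => ?_
      have hj' : j < q := Finset.mem_range.mp hj
      have : q+1-1-j = (q-1-j)+1 := by omega
      rw [this, pow_succ]; ring
    rw [hcg]
    have h0 : q+1-1-q = 0 := by omega
    rw [h0]
    have h1 : q+1+p = (q+p)+1 := by ring
    rw [h1]
    linear_combination z * ih

open Metric Set Complex Finset in
lemma circleInt_deriv_zero {r : ℝ} (hr : 0 < r) (f f' : ℂ → ℂ)
    (hd : ∀ z ∈ sphere (0:ℂ) r, HasDerivAt f (f' z) z)
    (hc : ContinuousOn f' (sphere (0:ℂ) r)) :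
    (∮ z in C(0, r), f' z) = 0 := by
  have hcont : Continuous fun θ : ℝ => f' (circleMap 0 r θ) :=
    hc.comp_continuous (continuous_circleMap 0 r) fun θ => circleMap_mem_sphere 0 hr.le θ
  have hF : ∀ θ ∈ uIcc (0:ℝ) (2*Real.pi), HasDerivAt (fun θ => f (circleMap 0 r θ))
      (deriv (circleMap 0 r) θ • f' (circleMap 0 r θ)) θ := by
    intro θ _
    have h1 := hasDerivAt_circleMap 0 r θ
    have h2 := hd _ (circleMap_mem_sphere 0 hr.le θ)
    have := HasDerivAt.scomp (𝕜 := ℝ) (𝕜' := ℂ) θ h2 h1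
    simpa [deriv_circleMap, smul_eq_mul, mul_comm, Function.comp_def] using this
  have hint : IntervalIntegrable (fun θ => deriv (circleMap 0 r) θ • f' (circleMap 0 r θ))
      volume 0 (2*Real.pi) := by
    apply Continuous.intervalIntegrable
    simp only [deriv_circleMap]
    exact ((continuous_circleMap 0 r).mul continuous_const).smul hcont
  have := intervalIntegral.integral_eq_sub_of_hasDerivAt hF hint
  rw [circleIntegral, this]
  have : circleMap 0 r (2*Real.pi) = circleMap 0 r 0 := by
    simpa using periodic_circleMap 0 r 0
  rw [this, sub_self]

open Metric Set Complex Finset in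
lemma sphere_ne_zero {r : ℝ} (hr : 0 < r) {z : ℂ} (hz : z ∈ sphere (0:ℂ) r) : z ≠ 0 := by
  intro h
  rw [h, mem_sphere_zero_iff_norm, norm_zero] at hz
  exact hr.ne hz

open Metric Set Complex Finset in
lemma key_exp {r : ℝ} (hr : 0 < r) (w : ℂ) (n : ℕ) :
    (∮ z in C(0, r), Complex.exp (w*z) / z^(n+1)) = (2*Real.pi*I) * w^n / n.factorial := by
  induction n with
  | zero =>
    have h := circleIntegral_div_sub_of_differentiable_on_off_countable
      (s := ∅) (c := (0:ℂ)) (w := (0:ℂ)) countable_empty (mem_ball_self hr)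
      (f := fun z => Complex.exp (w*z))
      (Continuous.continuousOn (by fun_prop)) (fun z _ => by fun_prop)
    simpa using h
  | succ n ih =>
    have hzero := circleInt_deriv_zero hr (fun z => Complex.exp (w*z) / z^(n+1))
      (fun z => w * Complex.exp (w*z) / z^(n+1) - (n+1) * Complex.exp (w*z) / z^(n+2))
      (fun z hz => by
        have hz0 : z ≠ 0 := sphere_ne_zero hr hz
        have h1 : HasDerivAt (fun z : ℂ => Complex.exp (w*z)) (Complex.exp (w*z) * w) z := by
          simpa using (HasDerivAt.cexp ((hasDerivAt_id z).const_mul w))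
        have h2 : HasDerivAt (fun z : ℂ => z^(n+1)) ((n+1) * z^n) z := by
          simpa using hasDerivAt_pow (n+1) z
        have := h1.div h2 (pow_ne_zero _ hz0)
        refine this.congr_deriv ?_
        field_simp
        ring)
      (by
        apply ContinuousOn.sub
        · exact ContinuousOn.div (by fun_prop) (by fun_prop)
            (fun z hz => pow_ne_zero _ (sphere_ne_zero hr hz))
        · exact ContinuousOn.div (by fun_prop) (by fun_prop)
            (fun z hz => pow_ne_zero _ (sphere_ne_zero hr hz)))
    have hi1 : CircleIntegrable (fun z => w * Complex.exp (w*z) / z^(n+1)) 0 r :=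
      (ContinuousOn.div (by fun_prop) (by fun_prop)
        (fun z hz => pow_ne_zero _ (sphere_ne_zero hr hz))).circleIntegrable hr.le
    have hi2 : CircleIntegrable (fun z => ((n:ℂ)+1) * Complex.exp (w*z) / z^(n+2)) 0 r :=
      (ContinuousOn.div (by fun_prop) (by fun_prop)
        (fun z hz => pow_ne_zero _ (sphere_ne_zero hr hz))).circleIntegrable hr.le
    rw [circleIntegral.integral_sub hi1 hi2] at hzero
    have e1 : (∮ z in C(0, r), w * Complex.exp (w*z) / z^(n+1))
        = w * ((2*Real.pi*I) * w^n / n.factorial) := by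
      have h := circleIntegral.integral_smul w (fun z => Complex.exp (w*z) / z^(n+1)) 0 r
      simp only [smul_eq_mul] at h
      calc (∮ z in C(0, r), w * Complex.exp (w*z) / z^(n+1))
          = ∮ z in C(0, r), w * (Complex.exp (w*z) / z^(n+1)) :=
            circleIntegral.integral_congr hr.le (fun z _ => by ring)
        _ = w * ∮ z in C(0, r), Complex.exp (w*z) / z^(n+1) := h
        _ = w * ((2*Real.pi*I) * w^n / n.factorial) := by rw [ih]
    have e2 : (∮ z in C(0, r), ((n:ℂ)+1) * Complex.exp (w*z) / z^(n+2))
        = ((n:ℂ)+1) * ∮ z in C(0, r), Complex.exp (w*z) / z^(n+2) := by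
      have h := circleIntegral.integral_smul ((n:ℂ)+1) (fun z => Complex.exp (w*z) / z^(n+2)) 0 r
      simp only [smul_eq_mul] at h
      calc (∮ z in C(0, r), ((n:ℂ)+1) * Complex.exp (w*z) / z^(n+2))
          = ∮ z in C(0, r), ((n:ℂ)+1) * (Complex.exp (w*z) / z^(n+2)) :=
            circleIntegral.integral_congr hr.le (fun z _ => by ring)
        _ = ((n:ℂ)+1) * ∮ z in C(0, r), Complex.exp (w*z) / z^(n+2) := h
    rw [e1, e2, sub_eq_zero] at hzero
    have hn1 : ((n:ℂ)+1) ≠ 0 := by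
      have : (((n+1:ℕ)):ℂ) ≠ 0 := Nat.cast_ne_zero.mpr (Nat.succ_ne_zero n)
      push_cast at this; exact this
    have hfac : ((n.factorial : ℂ)) ≠ 0 := Nat.cast_ne_zero.mpr n.factorial_ne_zero
    have heq : (∮ z in C(0, r), Complex.exp (w*z) / z^(n+2))
        = w * ((2*Real.pi*I) * w^n / n.factorial) / ((n:ℂ)+1) := by
      rw [eq_div_iff hn1, mul_comm]
      exact hzero.symm
    rw [heq]
    rw [show (n+1).factorial = (n+1) * n.factorial from Nat.factorial_succ n]
    push_cast
    field_simp
    ring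

open Metric Set Complex Finset in
lemma pow_exp_zero {r : ℝ} (hr : 0 < r) (w : ℂ) (m : ℕ) :
    (∮ z in C(0, r), z^m * Complex.exp (w*z)) = 0 :=
  circleIntegral_eq_zero_of_differentiable_on_off_countable hr.le (s := ∅) countable_empty
    (Continuous.continuousOn (by fun_prop)) (fun z _ => by fun_prop)

open Metric Set Complex Finset in
lemma circleInt_sum {ι : Type*} (s : Finset ι) (f : ι → ℂ → ℂ) (c : ℂ) (R : ℝ)
    (h : ∀ i ∈ s, CircleIntegrable (f i) c R) :
    (∮ z in C(c, R), ∑ i ∈ s, f i z) = ∑ i ∈ s, ∮ z in C(c, R), f i z := by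
  simp only [circleIntegral, smul_sum]
  exact intervalIntegral.integral_finset_sum fun i hi => ((h i hi).out)

open Metric Set Complex Finset in
lemma L5 {r : ℝ} (hr : 0 < r) (w : ℂ) (P j : ℕ) :
    (∮ z in C(0, r), Complex.exp (w*z) * (1+z)^P / z^(j+1))
      = (2*Real.pi*I) * ∑ i ∈ Finset.range (j+1), (P.choose i : ℂ) * w^(j-i) / (j-i).factorial := by
  have hcg : EqOn (fun z : ℂ => Complex.exp (w*z) * (1+z)^P / z^(j+1))
      (fun z : ℂ => ∑ i ∈ Finset.range (P+1), (P.choose i : ℂ) * (z^i * Complex.exp (w*z) / z^(j+1)))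
      (sphere (0:ℂ) r) := by
    intro z _
    simp only
    have hbin : (1+z)^P = ∑ i ∈ Finset.range (P+1), z^i * (P.choose i : ℂ) := by
      rw [add_comm (1:ℂ) z, add_pow]
      exact Finset.sum_congr rfl fun i _ => by rw [one_pow]; ring
    rw [hbin, Finset.mul_sum, Finset.sum_div]
    exact Finset.sum_congr rfl fun i _ => by ring
  rw [circleIntegral.integral_congr hr.le hcg]
  rw [circleInt_sum _ _ _ _ (fun i _ => ?_)]
  swap
  · apply ContinuousOn.circleIntegrable hr.le
    exact ContinuousOn.mul continuousOn_const (ContinuousOn.div (by fun_prop) (by fun_prop)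
      (fun z hz => pow_ne_zero _ (sphere_ne_zero hr hz)))
  -- each term
  have term : ∀ i, (∮ z in C(0, r), (P.choose i : ℂ) * (z^i * Complex.exp (w*z) / z^(j+1)))
      = (P.choose i : ℂ) * (if i ≤ j then (2*Real.pi*I) * w^(j-i) / (j-i).factorial else 0) := by
    intro i
    have h := circleIntegral.integral_smul (𝕜 := ℂ) (P.choose i : ℂ)
      (fun z => z^i * Complex.exp (w*z) / z^(j+1)) 0 r
    simp only [smul_eq_mul] at h
    rw [h]
    congr 1
    by_cases hij : i ≤ j
    · rw [if_pos hij, ← key_exp hr w (j-i)]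
      apply circleIntegral.integral_congr hr.le
      intro z hz
      have hz0 := sphere_ne_zero hr hz
      simp only
      rw [div_eq_div_iff (pow_ne_zero _ hz0) (pow_ne_zero _ hz0)]
      have hzz : z^i * z^(j-i+1) = z^(j+1) := by rw [← pow_add]; congr 1; omega
      linear_combination Complex.exp (w*z) * hzz
    · rw [if_neg hij]
      conv_rhs => rw [← pow_exp_zero hr w (i-j-1)]
      apply circleIntegral.integral_congr hr.le
      intro z hz
      have hz0 := sphere_ne_zero hr hz
      simp only
      rw [div_eq_iff (pow_ne_zero _ hz0)]
      have hzz : z^(i-j-1) * z^(j+1) = z^i := by rw [← pow_add]; congr 1; omega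
      linear_combination (-Complex.exp (w*z)) * hzz
  simp only [term]
  set G : ℕ → ℂ := fun i =>
    if i ≤ j then (2*Real.pi*I) * ((P.choose i : ℂ) * w^(j-i) / (j-i).factorial) else 0 with hG
  have hL : ∑ i ∈ Finset.range (P+1),
      ((P.choose i : ℂ) * (if i ≤ j then (2*Real.pi*I) * w^(j-i) / (j-i).factorial else 0))
      = ∑ i ∈ Finset.range (P+1), G i := by
    refine Finset.sum_congr rfl fun i _ => ?_
    simp only [hG]
    split_ifs with h
    · ring
    · exact mul_zero _
  have h1 : ∑ i ∈ Finset.range (P+1), G i = ∑ i ∈ Finset.range (P+j+2), G i := by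
    refine Finset.sum_subset (Finset.range_subset_range.mpr (by omega)) (fun i _ hi => ?_)
    rw [Finset.mem_range, not_lt] at hi
    have hc0 : P.choose i = 0 := Nat.choose_eq_zero_of_lt (by omega)
    by_cases h : i ≤ j <;> simp [hG, h, hc0]
  have h2 : ∑ i ∈ Finset.range (j+1), G i = ∑ i ∈ Finset.range (P+j+2), G i := by
    refine Finset.sum_subset (Finset.range_subset_range.mpr (by omega)) (fun i _ hi => ?_)
    rw [Finset.mem_range, not_lt] at hi
    have h : ¬ i ≤ j := by omega
    simp [hG, h]
  have h3 : (2*Real.pi*I : ℂ) * ∑ i ∈ Finset.range (j+1),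
      (P.choose i : ℂ) * w^(j-i) / (j-i).factorial = ∑ i ∈ Finset.range (j+1), G i := by
    rw [Finset.mul_sum]
    refine Finset.sum_congr rfl fun i hi => ?_
    rw [Finset.mem_range] at hi
    simp only [hG, if_pos (by omega : i ≤ j)]
    try ring
  rw [hL, h1, h3, h2]

open Metric Set Complex Finset in
lemma main (p q : ℕ) (hq : 1 ≤ q) (a : ℝ) (ha : -1 < a) (c r : ℝ) (hr : |a|/(1+a) < r) :
    ((Real.exp (a/(1+a) * c) - (1+a)^(p+1) * ∑ j ∈ Finset.range q, (-a)^j * Lag j p c : ℝ) : ℂ)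
    = (((1+a)^(p+1) * (-a)^q : ℝ) : ℂ) * (1/(2*(Real.pi:ℂ)*Complex.I)) *
      ∮ z in C(0, r), Complex.exp (-(c:ℂ)*z) * ((z+1)^(q+p+1) / z^(q+1)) *
        (z / ((((a:ℂ)+1)*z + (a:ℂ)) * (z+1))) := by
  have ha1 : (0:ℝ) < 1 + a := by linarith
  have hr0 : (0:ℝ) < r := lt_of_le_of_lt (div_nonneg (abs_nonneg a) ha1.le) hr
  set b : ℂ := (a:ℂ) with hb
  have hb1 : b + 1 ≠ 0 := by
    rw [hb, show ((a:ℂ)+1) = ((a+1 : ℝ) : ℂ) by push_cast; ring]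
    exact_mod_cast (by linarith : a + 1 ≠ 0)
  have hX : ∀ z ∈ sphere (0:ℂ) r, (b+1)*z + b ≠ 0 := by
    intro z hz h0
    have hz' : ‖z‖ = r := mem_sphere_zero_iff_norm.mp hz
    have h1 : (b+1)*z = -b := by linear_combination h0
    have h2 : ‖(b+1)*z‖ = |a| := by
      rw [h1, norm_neg, hb, Complex.norm_real, Real.norm_eq_abs]
    rw [norm_mul, hz'] at h2
    have h3 : ‖b+1‖ = a+1 := by
      rw [hb, show ((a:ℂ)+1) = ((a+1 : ℝ) : ℂ) by push_cast; ring, Complex.norm_real,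
        Real.norm_eq_abs, abs_of_pos (by linarith)]
    rw [h3] at h2
    have h4 : |a| < r * (1+a) := (div_lt_iff₀ ha1).mp hr
    nlinarith
  -- pointwise identity on the sphere
  have hEq : EqOn
      (fun z : ℂ => ((-b)^q : ℂ) * (Complex.exp (-(c:ℂ)*z) * ((z+1)^(q+p+1) / z^(q+1)) *
          (z / (((b+1)*z + b) * (z+1)))))
      (fun z : ℂ => Complex.exp (-(c:ℂ)*z) * (1+z)^p / ((b+1)*z + b)
        - ∑ j ∈ Finset.range q,
            (-b)^j * (Complex.exp (-(c:ℂ)*z) * (1+z)^(j+p) / z^(j+1)))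
      (sphere (0:ℂ) r) := by
    intro z hz
    have hz0 : z ≠ 0 := sphere_ne_zero hr0 hz
    have hXz : (b+1)*z + b ≠ 0 := hX z hz
    simp only
    have hS2 : ∑ j ∈ Finset.range q,
          (-b)^j * (Complex.exp (-(c:ℂ)*z) * (1+z)^(j+p) / z^(j+1))
        = Complex.exp (-(c:ℂ)*z) * ((1+z)^p * z^q - (-b)^q * (1+z)^(q+p))
            / (z^q * ((b+1)*z + b)) := by
      have step1 : ∀ j ∈ Finset.range q,
          (-b)^j * (Complex.exp (-(c:ℂ)*z) * (1+z)^(j+p) / z^(j+1))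
          = Complex.exp (-(c:ℂ)*z) * ((-b)^j * (1+z)^(j+p) * z^(q-1-j) * ((b+1)*z + b))
              / (z^q * ((b+1)*z + b)) := by
        intro j hj
        have hjq : j < q := Finset.mem_range.mp hj
        have hzz : z^(j+1) * z^(q-1-j) = z^q := by rw [← pow_add]; congr 1; omega
        rw [show (-b)^j * (Complex.exp (-(c:ℂ)*z) * (1+z)^(j+p) / z^(j+1))
            = ((-b)^j * (Complex.exp (-(c:ℂ)*z) * (1+z)^(j+p))) / z^(j+1) from by ring]
        rw [div_eq_div_iff (pow_ne_zero _ hz0) (mul_ne_zero (pow_ne_zero _ hz0) hXz)]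
        linear_combination (-(Complex.exp (-(c:ℂ)*z) * (-b)^j * (1+z)^(j+p) * ((b+1)*z + b))) * hzz
      rw [Finset.sum_congr rfl step1, ← Finset.sum_div, ← Finset.mul_sum]
      congr 2
      linear_combination polyId p b z q
    rw [hS2]
    by_cases hz1 : z + 1 = 0
    · have hzm : z = -1 := by linear_combination hz1
      subst hzm
      rcases Nat.eq_zero_or_pos p with hp | hp
      · subst hp
        have hXm : (b+1)*(-1:ℂ) + b = -1 := by ring
        have hm : ((-1:ℂ))^q ≠ 0 := pow_ne_zero _ (by norm_num)
        have hq0 : q ≠ 0 := by omega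
        simp only [hXm]
        norm_num [zero_pow hq0]
        try field_simp [hm]
        try ring
      · have h01 : ((-1:ℂ)+1) = 0 := by ring
        have h10 : ((1:ℂ)+(-1)) = 0 := by ring
        rw [h01, h10]
        rw [zero_pow (by omega : q+p+1 ≠ 0), zero_pow (by omega : p ≠ 0),
          zero_pow (by omega : q+p ≠ 0)]
        simp
    · field_simp
      ring
  -- integrability facts
  have hie : CircleIntegrable (fun z : ℂ => Complex.exp (-(c:ℂ)*z) * (1+z)^p / ((b+1)*z + b)) 0 r := by
    apply ContinuousOn.circleIntegrable hr0.le
    exact ContinuousOn.div (by fun_prop) (by fun_prop) hX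
  have hij : ∀ j : ℕ, CircleIntegrable
      (fun z : ℂ => (-b)^j * (Complex.exp (-(c:ℂ)*z) * (1+z)^(j+p) / z^(j+1))) 0 r := by
    intro j
    apply ContinuousOn.circleIntegrable hr0.le
    apply ContinuousOn.mul continuousOn_const
    exact ContinuousOn.div (by fun_prop) (by fun_prop)
      (fun z hz => pow_ne_zero _ (sphere_ne_zero hr0 hz))
  have hsum : CircleIntegrable (fun z : ℂ => ∑ j ∈ Finset.range q,
      (-b)^j * (Complex.exp (-(c:ℂ)*z) * (1+z)^(j+p) / z^(j+1))) 0 r := by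
    apply ContinuousOn.circleIntegrable hr0.le
    apply continuousOn_finset_sum
    intro j _
    apply ContinuousOn.mul continuousOn_const
    exact ContinuousOn.div (by fun_prop) (by fun_prop)
      (fun z hz => pow_ne_zero _ (sphere_ne_zero hr0 hz))
  -- second pole
  have hw0 : -b/(b+1) ∈ ball (0:ℂ) r := by
    rw [mem_ball_zero_iff, norm_div, norm_neg, hb, Complex.norm_real, Real.norm_eq_abs,
      show ((a:ℂ)+1) = ((a+1:ℝ):ℂ) by push_cast; ring, Complex.norm_real, Real.norm_eq_abs,
      abs_of_pos (by linarith : (0:ℝ) < a+1)]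
    rwa [show a+1 = 1+a from by ring]
  have hone : (1:ℂ) + (-b/(b+1)) = 1/(b+1) := by field_simp; ring
  have hpole : (∮ z in C(0,r), Complex.exp (-(c:ℂ)*z) * (1+z)^p / ((b+1)*z + b))
      = 2*Real.pi*I * (Complex.exp (-(c:ℂ) * (-b/(b+1))) * (1/(b+1))^p / (b+1)) := by
    have hfeq : ∀ z : ℂ, Complex.exp (-(c:ℂ)*z) * (1+z)^p / ((b+1)*z + b)
        = (Complex.exp (-(c:ℂ)*z) * (1+z)^p / (b+1)) / (z - (-b/(b+1))) := by
      intro z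
      rw [div_div]
      congr 1
      field_simp
      ring
    rw [circleIntegral.integral_congr hr0.le (fun z _ => hfeq z)]
    have hC := circleIntegral_div_sub_of_differentiable_on_off_countable (s := ∅)
      countable_empty hw0 (f := fun z : ℂ => Complex.exp (-(c:ℂ)*z) * (1+z)^p / (b+1))
      (Continuous.continuousOn (by fun_prop)) (fun z _ => by fun_prop)
    rw [hC]
    simp only [hone]
  -- individual sum terms
  have hterm : ∀ j ∈ Finset.range q,
      (∮ z in C(0,r), (-b)^j * (Complex.exp (-(c:ℂ)*z) * (1+z)^(j+p) / z^(j+1)))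
      = (-b)^j * (2*Real.pi*I) * ((Lag j p c : ℝ) : ℂ) := by
    intro j _
    have h := circleIntegral.integral_smul ((-b)^j)
      (fun z : ℂ => Complex.exp (-(c:ℂ)*z) * (1+z)^(j+p) / z^(j+1)) 0 r
    simp only [smul_eq_mul] at h
    rw [h, L5 hr0 (-(c:ℂ)) (j+p) j]
    have hLag : ((Lag j p c : ℝ) : ℂ)
        = ∑ i ∈ Finset.range (j+1), ((j+p).choose i : ℂ) * (-(c:ℂ))^(j-i) / ((j-i).factorial : ℂ) := by
      have hre : Lag j p c = ∑ i ∈ Finset.range (j+1),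
          (-1:ℝ)^(j-i) * ((j+p).choose i : ℝ) * c^(j-i) / ((j-i).factorial : ℝ) := by
        rw [Lag, ← Finset.sum_range_reflect]
        refine Finset.sum_congr rfl fun i hi => ?_
        have hij' : i < j+1 := Finset.mem_range.mp hi
        have h1 : j+1-1-i = j-i := by omega
        have h2 : j-(j-i) = i := by omega
        rw [h1, h2]
      rw [hre]
      push_cast
      refine Finset.sum_congr rfl fun i hi => ?_
      rw [neg_pow]
      ring
    rw [hLag, ← mul_assoc]
  -- key identity
  have key : (-b)^q * (∮ z in C(0, r), Complex.exp (-(c:ℂ)*z) * ((z+1)^(q+p+1) / z^(q+1)) *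
        (z / (((b+1)*z + b) * (z+1))))
      = 2*Real.pi*I * (Complex.exp (-(c:ℂ) * (-b/(b+1))) * (1/(b+1))^p / (b+1))
        - ∑ j ∈ Finset.range q, ((-b)^j * (2*Real.pi*I) * ((Lag j p c : ℝ) : ℂ)) := by
    have hsmul := circleIntegral.integral_smul ((-b)^q)
      (fun z : ℂ => Complex.exp (-(c:ℂ)*z) * ((z+1)^(q+p+1) / z^(q+1)) *
        (z / (((b+1)*z + b) * (z+1)))) 0 r
    simp only [smul_eq_mul] at hsmul
    rw [← hsmul, circleIntegral.integral_congr hr0.le hEq,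
      circleIntegral.integral_sub hie hsum,
      circleInt_sum _ _ _ _ (fun j _ => hij j), hpole,
      Finset.sum_congr rfl hterm]
  -- final computation
  have h2pi : (2*(Real.pi:ℂ)*I) ≠ 0 :=
    mul_ne_zero (mul_ne_zero two_ne_zero (by exact_mod_cast Real.pi_ne_zero)) Complex.I_ne_zero
  have hb1' : (1:ℂ) + b ≠ 0 := fun h => hb1 (by rwa [add_comm] at h)
  have hargs : ((a/(1+a)*c : ℝ) : ℂ) = -(c:ℂ) * (-b/(b+1)) := by
    push_cast [hb]
    field_simp [hb1', hb1]
    ring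
  have hsum2 : ∑ j ∈ Finset.range q, ((-b)^j * (2*Real.pi*I) * ((Lag j p c : ℝ) : ℂ))
      = (2*Real.pi*I) * ∑ j ∈ Finset.range q, ((-b)^j * ((Lag j p c : ℝ) : ℂ)) := by
    rw [Finset.mul_sum]
    exact Finset.sum_congr rfl fun j _ => by ring
  rw [hsum2] at key
  have hLHS : ((Real.exp (a/(1+a) * c)
        - (1+a)^(p+1) * ∑ j ∈ Finset.range q, (-a)^j * Lag j p c : ℝ) : ℂ)
      = Complex.exp (-(c:ℂ) * (-b/(b+1)))
        - (1+b)^(p+1) * ∑ j ∈ Finset.range q, ((-b)^j * ((Lag j p c : ℝ) : ℂ)) := by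
    rw [Complex.ofReal_sub, Complex.ofReal_exp, hargs]
    congr 1
    push_cast [hb]
    ring
  have hscal : (((1+a)^(p+1) * (-a)^q : ℝ) : ℂ) = (1+b)^(p+1) * (-b)^q := by
    push_cast [hb]
    ring
  rw [hLHS, hscal]
  rw [show (1+b)^(p+1) * (-b)^q * (1/(2*(Real.pi:ℂ)*I)) *
      (∮ z in C(0, r), Complex.exp (-(c:ℂ)*z) * ((z+1)^(q+p+1) / z^(q+1)) *
        (z / (((b+1)*z + b) * (z+1))))
      = (1+b)^(p+1) * (1/(2*(Real.pi:ℂ)*I)) *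
        ((-b)^q * (∮ z in C(0, r), Complex.exp (-(c:ℂ)*z) * ((z+1)^(q+p+1) / z^(q+1)) *
          (z / (((b+1)*z + b) * (z+1))))) from by ring]
  rw [key]
  have hbb : (1:ℂ) + b = b + 1 := by ring
  rw [hbb]
  rw [div_pow, one_pow]
  field_simp
  ring

open Metric Set Complex Finset in
theorem stmt6 (M N : ℕ) (hN : 1 ≤ N) (hMN : N ≤ M) (a : ℝ) (ha : -1 < a)
    (y : ℝ) (r : ℝ) (hr : |a|/(1+a) < r) :
    ((Real.exp (a/(1+a) * (2*(M:ℝ)*y))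
        - (1+a)^(2*(M-N)+1) *
            ∑ j ∈ Finset.range (2*N-1), (-a)^j * Lag j (2*(M-N)) (2*(M:ℝ)*y) : ℝ) : ℂ) =
    -((((1+a)^(2*(M-N)+1) * a^(2*N-1) : ℝ)) : ℂ) * (1/(2*(Real.pi:ℂ)*Complex.I)) *
      ∮ z in C(0, r),
        Complex.exp (-(((2*(M:ℝ)*y : ℝ)) : ℂ) * z) * ((z+1)^(2*M) / z^(2*N)) *
          (z / ((((a:ℂ)+1)*z + (a:ℂ)) * (z+1))) := by
  have h := main (2*(M-N)) (2*N-1) (by omega) a ha (2*(M:ℝ)*y) r hr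
  have e1 : 2*N-1+1 = 2*N := by omega
  have e2 : 2*N-1 + 2*(M-N) + 1 = 2*M := by omega
  rw [e1, e2] at h
  rw [h]
  have hodd : Odd (2*N-1) := ⟨N-1, by omega⟩
  have hco : (((1+a)^(2*(M-N)+1) * (-a)^(2*N-1) : ℝ) : ℂ)
      = -((((1+a)^(2*(M-N)+1) * a^(2*N-1) : ℝ)) : ℂ) := by
    rw [show ((1+a)^(2*(M-N)+1) * (-a)^(2*N-1) : ℝ) = -((1+a)^(2*(M-N)+1) * a^(2*N-1)) by
      rw [hodd.neg_pow]; ring]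
    push_cast
    ring
  rw [hco]
end

section
/- For all real ξ and η: ∫_ξ^∞ K_Airy(t, η) dt + ∫_η^∞ K_Airy(ξ, t) dt = ( ∫_ξ^∞ Ai(t) dt ) · ( ∫_η^∞ Ai(t) dt ), where K_Airy(x, y) = ∫_0^∞ Ai(x+s) Ai(y+s) ds. -/
open MeasureTheory

/-- The Airy function, defined by the contour integral over `Γ^∞`. -/
noncomputable def Ai (ξ : ℝ) : ℂ :=
  -(1/(2*(Real.pi:ℂ)*Complex.I)) *
    (-(∫ t in Set.Ioi (1:ℝ),
          Complex.exp (-(ξ:ℂ) * ((t:ℂ) * Complex.exp (((Real.pi/3 : ℝ) : ℂ)*Complex.I))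
              + ((t:ℂ) * Complex.exp (((Real.pi/3 : ℝ) : ℂ)*Complex.I))^3/3) *
            Complex.exp (((Real.pi/3 : ℝ) : ℂ)*Complex.I))
      + (∫ θ in (Real.pi/3)..(-(Real.pi/3)),
          Complex.exp (-(ξ:ℂ) * Complex.exp ((θ:ℂ)*Complex.I)
              + (Complex.exp ((θ:ℂ)*Complex.I))^3/3) *
            (Complex.I * Complex.exp ((θ:ℂ)*Complex.I)))
      + ∫ t in Set.Ioi (1:ℝ),
          Complex.exp (-(ξ:ℂ) * ((t:ℂ) * Complex.exp (-((Real.pi/3 : ℝ) : ℂ)*Complex.I))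
              + ((t:ℂ) * Complex.exp (-((Real.pi/3 : ℝ) : ℂ)*Complex.I))^3/3) *
            Complex.exp (-((Real.pi/3 : ℝ) : ℂ)*Complex.I))

open Set Filter Topology

noncomputable def rayI (θ x : ℝ) : ℂ :=
  ∫ t in Set.Ioi (1:ℝ),
    Complex.exp (-(x:ℂ) * ((t:ℂ) * Complex.exp ((θ:ℂ)*Complex.I))
        + ((t:ℂ) * Complex.exp ((θ:ℂ)*Complex.I))^3/3) * Complex.exp ((θ:ℂ)*Complex.I)

noncomputable def arcI (x : ℝ) : ℂ :=
  ∫ θ in (Real.pi/3)..(-(Real.pi/3)),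
    Complex.exp (-(x:ℂ) * Complex.exp ((θ:ℂ)*Complex.I)
        + (Complex.exp ((θ:ℂ)*Complex.I))^3/3) * (Complex.I * Complex.exp ((θ:ℂ)*Complex.I))

lemma Ai_eq (x : ℝ) :
    Ai x = -(1/(2*(Real.pi:ℂ)*Complex.I)) *
      (-(rayI (Real.pi/3) x) + arcI x + rayI (-(Real.pi/3)) x) := by
  unfold Ai rayI arcI
  simp only [Complex.ofReal_neg]

lemma cube_exp_theta (θ : ℝ) (h : Complex.exp (((3*θ:ℝ):ℂ) * Complex.I) = -1) :
    (Complex.exp ((θ:ℂ) * Complex.I))^3 = -1 := by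
  rw [← Complex.exp_nat_mul, show ((3:ℕ):ℂ) * ((θ:ℂ)*Complex.I) = ((3*θ:ℝ):ℂ)*Complex.I by
    push_cast; ring, h]

lemma cube_pos : (Complex.exp (((Real.pi/3:ℝ):ℂ) * Complex.I))^3 = -1 := by
  apply cube_exp_theta
  rw [show ((3*(Real.pi/3):ℝ):ℂ) = (Real.pi:ℂ) by push_cast; ring, Complex.exp_pi_mul_I]

lemma cube_neg : (Complex.exp (((-(Real.pi/3):ℝ):ℂ) * Complex.I))^3 = -1 := by
  apply cube_exp_theta
  rw [show (((3*(-(Real.pi/3)):ℝ):ℂ) * Complex.I) = -((Real.pi:ℂ)*Complex.I) by push_cast; ring,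
    Complex.exp_neg, Complex.exp_pi_mul_I]
  norm_num

lemma norm_ray_integrand (x t θ : ℝ) (h3 : (Complex.exp ((θ:ℂ)*Complex.I))^3 = -1)
    (hc : Real.cos θ = 1/2) :
    ‖Complex.exp (-(x:ℂ) * ((t:ℂ) * Complex.exp ((θ:ℂ)*Complex.I))
        + ((t:ℂ) * Complex.exp ((θ:ℂ)*Complex.I))^3/3) * Complex.exp ((θ:ℂ)*Complex.I)‖
      = Real.exp (-(x*t)/2 - t^3/3) := by
  have harg : -(x:ℂ) * ((t:ℂ) * Complex.exp ((θ:ℂ)*Complex.I))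
      + ((t:ℂ) * Complex.exp ((θ:ℂ)*Complex.I))^3/3
      = ((-(x*t):ℝ):ℂ) * Complex.exp ((θ:ℂ)*Complex.I) + ((-(t^3)/3:ℝ):ℂ) := by
    rw [mul_pow, h3]; push_cast; ring
  rw [harg, Complex.exp_add, norm_mul, norm_mul, Complex.norm_exp_ofReal_mul_I, Complex.norm_exp, Complex.norm_exp]
  have hre : (((-(x*t):ℝ):ℂ) * Complex.exp ((θ:ℂ)*Complex.I)).re = -(x*t) * (1/2) := by
    rw [Complex.mul_re]
    simp [Complex.exp_ofReal_mul_I_re, hc]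
  rw [hre, Complex.ofReal_re, ← Real.exp_add]
  ring_nf

lemma norm_arc_integrand (x θ : ℝ) :
    ‖Complex.exp (-(x:ℂ) * Complex.exp ((θ:ℂ)*Complex.I)
        + (Complex.exp ((θ:ℂ)*Complex.I))^3/3) * (Complex.I * Complex.exp ((θ:ℂ)*Complex.I))‖
      = Real.exp (-(x * Real.cos θ) + Real.cos (3*θ) / 3) := by
  have h3 : (Complex.exp ((θ:ℂ)*Complex.I))^3 = Complex.exp (((3*θ:ℝ):ℂ)*Complex.I) := by
    rw [← Complex.exp_nat_mul]; push_cast; ring_nf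
  have harg : -(x:ℂ) * Complex.exp ((θ:ℂ)*Complex.I) + (Complex.exp ((θ:ℂ)*Complex.I))^3/3
      = ((-x:ℝ):ℂ) * Complex.exp ((θ:ℂ)*Complex.I)
        + ((1/3:ℝ):ℂ) * Complex.exp (((3*θ:ℝ):ℂ)*Complex.I) := by
    rw [h3]; push_cast; ring
  rw [harg]
  simp only [norm_mul, Complex.norm_I, Complex.norm_exp_ofReal_mul_I,
    Complex.norm_exp, one_mul, mul_one, Complex.mul_I_re, Complex.ofReal_im, neg_zero,
    Real.exp_zero]
  have : (((-x:ℝ):ℂ) * Complex.exp ((θ:ℂ)*Complex.I)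
      + ((1/3:ℝ):ℂ) * Complex.exp (((3*θ:ℝ):ℂ)*Complex.I)).re
      = -(x * Real.cos θ) + Real.cos (3*θ) / 3 := by
    simp only [Complex.add_re, Complex.mul_re, Complex.ofReal_re, Complex.ofReal_im,
      Complex.exp_ofReal_mul_I_re, Complex.exp_ofReal_mul_I_im]
    ring
  rw [this]

lemma integrableOn_exp_cube (c : ℝ) :
    IntegrableOn (fun t : ℝ => Real.exp (c*t - t^3/3)) (Ioi 1) := by
  set b : ℝ := |c| + 1 with hb
  have hb0 : 0 ≤ |c| := abs_nonneg c
  clear_value b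
  have hb1 : 1 ≤ b := by linarith
  have key : ∀ t ∈ Ioi (1:ℝ), c*t - t^3/3 ≤ b^3 + (-t) := by
    intro t ht
    simp only [mem_Ioi] at ht
    have h1 : c*t + t ≤ b*t := by
      have h0 : c*t ≤ |c| * t := by nlinarith [le_abs_self c]
      nlinarith
    have e1 : 0 ≤ (t-b)^2*(t+2*b) := mul_nonneg (sq_nonneg _) (by linarith)
    have e2 : t*b ≤ t*b^2 := by
      nlinarith [mul_nonneg (mul_nonneg (by linarith : (0:ℝ) ≤ t) (by linarith : (0:ℝ) ≤ b))
        (by linarith : (0:ℝ) ≤ b-1)]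
    have hb3 : (0:ℝ) ≤ b^3 := by positivity
    have e1' : 0 ≤ t^3 - 3*(t*b^2) + 2*b^3 := by nlinarith [e1]
    linarith [h1, e1', e2, hb3]
  have hint : IntegrableOn (fun t : ℝ => Real.exp (b^3) * Real.exp (-1*t)) (Ioi 1) :=
    (exp_neg_integrableOn_Ioi 1 one_pos).const_mul _
  refine hint.mono' ?_ ?_
  · exact (Real.continuous_exp.comp (by continuity)).aestronglyMeasurable
  · filter_upwards [ae_restrict_mem measurableSet_Ioi] with t ht
    rw [Real.norm_eq_abs, abs_of_pos (Real.exp_pos _), ← Real.exp_add]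
    exact Real.exp_le_exp.mpr (by simpa [neg_mul] using key t ht)
noncomputable def Dconst (a : ℝ) : ℝ := ∫ t in Set.Ioi (1:ℝ), Real.exp (|a|/2*t - t^3/3)

lemma Dconst_nonneg (a : ℝ) : 0 ≤ Dconst a :=
  integral_nonneg fun t => (Real.exp_pos _).le

lemma rayI_norm_le {θ : ℝ} (h3 : (Complex.exp ((θ:ℂ)*Complex.I))^3 = -1)
    (hc : Real.cos θ = 1/2) {a x : ℝ} (hx : a ≤ x) :
    ‖rayI θ x‖ ≤ Real.exp (-x/2) * Dconst a := by
  refine le_trans (norm_integral_le_integral_norm _) ?_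
  rw [show Real.exp (-x/2) * Dconst a
      = ∫ t in Set.Ioi (1:ℝ), Real.exp (-x/2) * Real.exp (|a|/2*t - t^3/3) from
    (integral_const_mul _ _).symm]
  refine integral_mono_of_nonneg (Eventually.of_forall fun t => norm_nonneg _)
    (((integrableOn_exp_cube (|a|/2)).const_mul _)) ?_
  filter_upwards [ae_restrict_mem measurableSet_Ioi] with t ht
  rw [norm_ray_integrand x t θ h3 hc, ← Real.exp_add]
  apply Real.exp_le_exp.mpr
  simp only [mem_Ioi] at ht
  have h1 : -x ≤ |a| := by rw [neg_le]; exact neg_abs_le a |>.trans hx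
  nlinarith [abs_nonneg a]

lemma arcI_norm_le {a x : ℝ} (hx : a ≤ x) :
    ‖arcI x‖ ≤ Real.exp (|a|/2 + 1/3) * Real.exp (-x/2) * (2*Real.pi/3) := by
  have hπ := Real.pi_pos
  have key : ∀ θ ∈ Set.uIoc (Real.pi/3) (-(Real.pi/3)),
      ‖Complex.exp (-(x:ℂ) * Complex.exp ((θ:ℂ)*Complex.I)
        + (Complex.exp ((θ:ℂ)*Complex.I))^3/3) * (Complex.I * Complex.exp ((θ:ℂ)*Complex.I))‖
      ≤ Real.exp (|a|/2 + 1/3) * Real.exp (-x/2) := by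
    intro θ hθ
    rw [Set.uIoc_of_ge (by linarith)] at hθ
    obtain ⟨h1, h2⟩ := hθ
    have habs : |θ| ≤ Real.pi/3 := abs_le.mpr ⟨h1.le, h2⟩
    have hcos : (1:ℝ)/2 ≤ Real.cos θ := by
      rw [← Real.cos_pi_div_three, ← Real.cos_abs θ]
      exact Real.cos_le_cos_of_nonneg_of_le_pi (abs_nonneg θ) (by linarith) habs
    rw [norm_arc_integrand, ← Real.exp_add]
    apply Real.exp_le_exp.mpr
    have h3 : Real.cos (3*θ) ≤ 1 := Real.cos_le_one _
    have h4 : -x ≤ |a| := by rw [neg_le]; exact neg_abs_le a |>.trans hx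
    rcases le_or_gt 0 x with hx0 | hx0
    · nlinarith [abs_nonneg a]
    · nlinarith [Real.cos_le_one θ]
  refine le_trans (intervalIntegral.norm_integral_le_of_norm_le_const key) ?_
  have : |(-(Real.pi/3)) - Real.pi/3| = 2*Real.pi/3 := by
    rw [abs_of_nonpos (by linarith)]; ring
  rw [this]


lemma Ai_norm_le (a : ℝ) : ∃ C, 0 ≤ C ∧ ∀ x, a ≤ x → ‖Ai x‖ ≤ C * Real.exp (-x/2) := by
  have hπ := Real.pi_pos
  have hD := Dconst_nonneg a
  refine ⟨‖-(1/(2*(Real.pi:ℂ)*Complex.I))‖ *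
    (2 * Dconst a + Real.exp (|a|/2 + 1/3) * (2*Real.pi/3)), by positivity, ?_⟩
  intro x hx
  have hc_neg : Real.cos (-(Real.pi/3)) = 1/2 := by
    rw [Real.cos_neg, Real.cos_pi_div_three]
  have hP := rayI_norm_le cube_pos Real.cos_pi_div_three hx
  have hM := rayI_norm_le cube_neg hc_neg hx
  have harc := arcI_norm_le hx
  rw [Ai_eq, norm_mul]
  calc ‖-(1/(2*(Real.pi:ℂ)*Complex.I))‖ * ‖-rayI (Real.pi/3) x + arcI x + rayI (-(Real.pi/3)) x‖
      ≤ ‖-(1/(2*(Real.pi:ℂ)*Complex.I))‖ *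
        ((2 * Dconst a + Real.exp (|a|/2 + 1/3) * (2*Real.pi/3)) * Real.exp (-x/2)) := by
        refine mul_le_mul_of_nonneg_left ?_ (norm_nonneg _)
        refine le_trans ((norm_add_le _ _).trans (add_le_add (norm_add_le _ _) le_rfl)) ?_
        rw [norm_neg]
        calc ‖rayI (Real.pi/3) x‖ + ‖arcI x‖ + ‖rayI (-(Real.pi/3)) x‖
            ≤ (Real.exp (-x/2) * Dconst a) + Real.exp (|a|/2 + 1/3) * Real.exp (-x/2) * (2*Real.pi/3)
              + (Real.exp (-x/2) * Dconst a) := add_le_add (add_le_add hP harc) hM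
          _ = (2 * Dconst a + Real.exp (|a|/2 + 1/3) * (2*Real.pi/3)) * Real.exp (-x/2) := by ring
    _ = ‖-(1/(2*(Real.pi:ℂ)*Complex.I))‖ *
        (2 * Dconst a + Real.exp (|a|/2 + 1/3) * (2*Real.pi/3)) * Real.exp (-x/2) := by ring

lemma continuous_rayI {θ : ℝ} (h3 : (Complex.exp ((θ:ℂ)*Complex.I))^3 = -1)
    (hc : Real.cos θ = 1/2) : Continuous (rayI θ) := by
  rw [continuous_iff_continuousAt]
  intro x₀
  unfold rayI
  refine continuousAt_of_dominated ?_ ?_ (integrableOn_exp_cube (|x₀|+1)) ?_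
  · exact Eventually.of_forall fun x => Continuous.aestronglyMeasurable (by fun_prop)
  · filter_upwards [Metric.ball_mem_nhds x₀ one_pos] with x hx
    filter_upwards [ae_restrict_mem measurableSet_Ioi] with t ht
    rw [norm_ray_integrand x t θ h3 hc]
    apply Real.exp_le_exp.mpr
    simp only [mem_Ioi] at ht
    rw [Metric.mem_ball, Real.dist_eq] at hx
    have h1 : |x| ≤ |x₀| + 1 := by
      have := abs_sub_abs_le_abs_sub x x₀
      linarith
    have h2 : -(x*t)/2 ≤ |x| * t := by
      have := neg_abs_le x
      nlinarith [abs_nonneg x]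
    nlinarith
  · exact Eventually.of_forall fun t => Continuous.continuousAt (by fun_prop)

lemma continuous_arcI : Continuous arcI := by
  unfold arcI
  apply intervalIntegral.continuous_parametric_intervalIntegral_of_continuous'
  fun_prop

lemma continuous_Ai : Continuous Ai := by
  have hc_neg : Real.cos (-(Real.pi/3)) = 1/2 := by
    rw [Real.cos_neg, Real.cos_pi_div_three]
  have : Continuous fun x => -(1/(2*(Real.pi:ℂ)*Complex.I)) *
      (-(rayI (Real.pi/3) x) + arcI x + rayI (-(Real.pi/3)) x) :=
    continuous_const.mul
      (((continuous_rayI cube_pos Real.cos_pi_div_three).neg.add continuous_arcI).add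
        (continuous_rayI cube_neg hc_neg))
  exact this.congr fun x => (Ai_eq x).symm

lemma integrableOn_Ai (a : ℝ) : IntegrableOn Ai (Ioi a) := by
  obtain ⟨C, hC0, hC⟩ := Ai_norm_le a
  have hint : IntegrableOn (fun x : ℝ => C * Real.exp (-(1/2:ℝ)*x)) (Ioi a) :=
    (exp_neg_integrableOn_Ioi a (by norm_num)).const_mul _
  refine hint.mono' continuous_Ai.aestronglyMeasurable.restrict ?_
  filter_upwards [ae_restrict_mem measurableSet_Ioi] with x hx
  simp only [mem_Ioi] at hx
  have := hC x hx.le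
  calc ‖Ai x‖ ≤ C * Real.exp (-x/2) := this
    _ = C * Real.exp (-(1/2:ℝ)*x) := by ring_nf

lemma intervalIntegrable_Ai (a b : ℝ) : IntervalIntegrable Ai volume a b := by
  refine ((integrableOn_Ai (min a b - 1)).mono_set ?_).intervalIntegrable
  intro y hy
  rw [Set.mem_Ioi]
  rcases Set.mem_uIcc.mp hy with ⟨h1,_⟩|⟨h1,_⟩
  · have := min_le_left a b; linarith
  · have := min_le_right a b; linarith

noncomputable def FAi (x : ℝ) : ℂ := ∫ t in Ioi x, Ai t

lemma FAi_eq (x : ℝ) : FAi x = FAi 0 - ∫ t in (0:ℝ)..x, Ai t := by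
  rcases le_or_gt 0 x with h | h
  · have hIoc : IntegrableOn Ai (Ioc 0 x) :=
      (integrableOn_Ai (-1)).mono_set (fun y hy => by simp only [mem_Ioc, mem_Ioi] at *; linarith [hy.1])
    rw [intervalIntegral.integral_of_le h, eq_sub_iff_add_eq, add_comm]
    unfold FAi
    rw [← setIntegral_union (Ioc_disjoint_Ioi le_rfl) measurableSet_Ioi hIoc
      (integrableOn_Ai x), Ioc_union_Ioi_eq_Ioi h]
  · have hIoc : IntegrableOn Ai (Ioc x 0) :=
      (integrableOn_Ai (x-1)).mono_set (fun y hy => by simp only [mem_Ioc, mem_Ioi] at *; linarith [hy.1])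
    rw [intervalIntegral.integral_of_ge h.le, sub_neg_eq_add, add_comm]
    unfold FAi
    rw [← setIntegral_union (Ioc_disjoint_Ioi le_rfl) measurableSet_Ioi hIoc
      (integrableOn_Ai 0), Ioc_union_Ioi_eq_Ioi h.le]

lemma hasDerivAt_FAi (x : ℝ) : HasDerivAt FAi (-(Ai x)) x := by
  have h1 : HasDerivAt (fun y => ∫ t in (0:ℝ)..y, Ai t) (Ai x) x :=
    intervalIntegral.integral_hasDerivAt_right (intervalIntegrable_Ai 0 x)
      continuous_Ai.stronglyMeasurable.stronglyMeasurableAtFilter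
      continuous_Ai.continuousAt
  have h2 : HasDerivAt (fun y => FAi 0 - ∫ t in (0:ℝ)..y, Ai t) (0 - Ai x) x :=
    (hasDerivAt_const x (FAi 0)).sub h1
  simpa [← FAi_eq] using h2.congr_of_eventuallyEq (Eventually.of_forall fun y => FAi_eq y)

lemma FAi_tendsto : Tendsto FAi atTop (𝓝 0) := by
  have h1 : Tendsto (fun x : ℝ => ∫ t in (0:ℝ)..x, Ai t) atTop (𝓝 (FAi 0)) :=
    intervalIntegral_tendsto_integral_Ioi 0 (integrableOn_Ai 0) tendsto_id
  have h2 : Tendsto (fun x => FAi 0 - ∫ t in (0:ℝ)..x, Ai t) atTop (𝓝 (FAi 0 - FAi 0)) :=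
    tendsto_const_nhds.sub h1
  simpa [← FAi_eq] using h2

lemma FAi_bound (c : ℝ) : ∃ M, 0 ≤ M ∧ ∀ x, c ≤ x → ‖FAi x‖ ≤ M := by
  obtain ⟨C, hC0, hC⟩ := Ai_norm_le c
  refine ⟨∫ t in Ioi c, C * Real.exp (-(1/2:ℝ)*t), integral_nonneg fun t => by positivity, ?_⟩
  intro x hx
  have hint : IntegrableOn (fun t : ℝ => C * Real.exp (-(1/2:ℝ)*t)) (Ioi c) :=
    (exp_neg_integrableOn_Ioi c (by norm_num)).const_mul _
  calc ‖FAi x‖ ≤ ∫ t in Ioi x, ‖Ai t‖ := norm_integral_le_integral_norm _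
    _ ≤ ∫ t in Ioi x, C * Real.exp (-(1/2:ℝ)*t) := by
        refine integral_mono_of_nonneg (Eventually.of_forall fun t => norm_nonneg _)
          (hint.mono_set (Ioi_subset_Ioi hx)) ?_
        filter_upwards [ae_restrict_mem measurableSet_Ioi] with t ht
        simp only [mem_Ioi] at ht
        calc ‖Ai t‖ ≤ C * Real.exp (-t/2) := hC t (by linarith)
          _ = C * Real.exp (-(1/2:ℝ)*t) := by ring_nf
    _ ≤ ∫ t in Ioi c, C * Real.exp (-(1/2:ℝ)*t) := by
        refine setIntegral_mono_set hint (Eventually.of_forall fun t => by positivity)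
          (HasSubset.Subset.eventuallyLE (Ioi_subset_Ioi hx))

lemma integral_Ioi_shift (f : ℝ → ℂ) (a s : ℝ) :
    ∫ t in Ioi a, f (t + s) = ∫ t in Ioi (a + s), f t := by
  have := (measurePreserving_add_right volume s).setIntegral_preimage_emb
    (measurableEmbedding_addRight s) f (Ioi (a + s))
  rw [← this]
  congr 1
  ext y
  simp [mem_Ioi]

lemma continuous_FAi : Continuous FAi :=
  continuous_iff_continuousAt.mpr fun x => (hasDerivAt_FAi x).continuousAt

lemma integrableOn_FAi_mul_Ai (c d : ℝ) :
    IntegrableOn (fun s => FAi (c+s) * Ai (d+s)) (Ioi 0) := by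
  obtain ⟨M, hM0, hM⟩ := FAi_bound c
  obtain ⟨C, hC0, hC⟩ := Ai_norm_le d
  have hint : IntegrableOn (fun s : ℝ => (M * C * Real.exp (-d/2)) * Real.exp (-(1/2:ℝ)*s))
      (Ioi 0) := (exp_neg_integrableOn_Ioi 0 (by norm_num)).const_mul _
  refine hint.mono' ?_ ?_
  · exact ((continuous_FAi.comp (continuous_const.add continuous_id)).mul
      (continuous_Ai.comp (continuous_const.add continuous_id))).aestronglyMeasurable.restrict
  · filter_upwards [ae_restrict_mem measurableSet_Ioi] with s hs
    simp only [mem_Ioi] at hs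
    rw [norm_mul]
    calc ‖FAi (c+s)‖ * ‖Ai (d+s)‖ ≤ M * (C * Real.exp (-(d+s)/2)) := by
          exact mul_le_mul (hM _ (by linarith)) (hC _ (by linarith)) (norm_nonneg _) hM0
      _ = (M * C * Real.exp (-d/2)) * Real.exp (-(1/2:ℝ)*s) := by
          rw [show (-(d+s)/2 : ℝ) = -d/2 + -(1/2:ℝ)*s by ring, Real.exp_add]; ring

lemma integrableOn_Ai_mul_FAi (c d : ℝ) :
    IntegrableOn (fun s => Ai (c+s) * FAi (d+s)) (Ioi 0) :=
  (integrableOn_FAi_mul_Ai d c).congr_fun (fun s _ => mul_comm _ _) measurableSet_Ioi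

lemma swap_term (c d : ℝ) :
    (∫ t in Ioi c, ∫ s in Ioi (0:ℝ), Ai (t+s) * Ai (d+s))
      = ∫ s in Ioi (0:ℝ), FAi (c+s) * Ai (d+s) := by
  obtain ⟨C1, hC10, hC1⟩ := Ai_norm_le c
  obtain ⟨C2, hC20, hC2⟩ := Ai_norm_le d
  have hprod : Integrable (Function.uncurry fun t s => Ai (t+s) * Ai (d+s))
      ((volume.restrict (Ioi c)).prod (volume.restrict (Ioi 0))) := by
    have hbound : Integrable (fun p : ℝ × ℝ =>
        (C1 * Real.exp (-(1/2:ℝ)*p.1)) * ((C2 * Real.exp (-d/2)) * Real.exp (-1*p.2)))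
        ((volume.restrict (Ioi c)).prod (volume.restrict (Ioi 0))) :=
      Integrable.mul_prod ((exp_neg_integrableOn_Ioi c (by norm_num)).const_mul _)
        ((exp_neg_integrableOn_Ioi 0 one_pos).const_mul _)
    refine hbound.mono' ?_ ?_
    · exact ((continuous_Ai.comp (continuous_fst.add continuous_snd)).mul
        (continuous_Ai.comp (continuous_const.add continuous_snd))).aestronglyMeasurable
    · rw [Measure.prod_restrict]
      filter_upwards [ae_restrict_mem (measurableSet_Ioi.prod measurableSet_Ioi)] with p hp
      obtain ⟨h1, h2⟩ := hp
      simp only [mem_Ioi] at h1 h2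
      rw [Function.uncurry_apply_pair, norm_mul]
      calc ‖Ai (p.1+p.2)‖ * ‖Ai (d+p.2)‖
          ≤ (C1 * Real.exp (-(p.1+p.2)/2)) * (C2 * Real.exp (-(d+p.2)/2)) :=
            mul_le_mul (hC1 _ (by linarith)) (hC2 _ (by linarith)) (norm_nonneg _)
              (by positivity)
        _ = (C1 * Real.exp (-(1/2:ℝ)*p.1)) * ((C2 * Real.exp (-d/2)) * Real.exp (-1*p.2)) := by
            rw [show (-(p.1+p.2)/2 : ℝ) = -(1/2:ℝ)*p.1 + -(1/2:ℝ)*p.2 by ring,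
              show (-(d+p.2)/2 : ℝ) = -d/2 + -(1/2:ℝ)*p.2 by ring,
              show (-1*p.2 : ℝ) = -(1/2:ℝ)*p.2 + -(1/2:ℝ)*p.2 by ring,
              Real.exp_add, Real.exp_add, Real.exp_add]
            ring
  rw [integral_integral_swap hprod]
  congr 1
  ext s
  rw [show (∫ t in Ioi c, Ai (t+s) * Ai (d+s)) = (∫ t in Ioi c, Ai (t+s)) * Ai (d+s) from
    integral_mul_const _ _, integral_Ioi_shift Ai c s]
  rfl


/-- The Airy kernel `K_Airy(x, y) = ∫_0^∞ Ai(x+s) Ai(y+s) ds`. -/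
noncomputable def KAiry (x y : ℝ) : ℂ :=
  ∫ s in Set.Ioi (0:ℝ), Ai (x+s) * Ai (y+s)

theorem stmt16 (ξ η : ℝ) :
    (∫ t in Set.Ioi ξ, KAiry t η) + (∫ t in Set.Ioi η, KAiry ξ t) =
      (∫ t in Set.Ioi ξ, Ai t) * (∫ t in Set.Ioi η, Ai t) := by
  have h1 : (∫ t in Ioi ξ, KAiry t η) = ∫ s in Ioi 0, FAi (ξ+s) * Ai (η+s) := by
    unfold KAiry; exact swap_term ξ η
  have h2 : (∫ t in Ioi η, KAiry ξ t) = ∫ s in Ioi 0, Ai (ξ+s) * FAi (η+s) := by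
    unfold KAiry
    calc (∫ t in Ioi η, ∫ s in Ioi (0:ℝ), Ai (ξ+s) * Ai (t+s))
        = ∫ t in Ioi η, ∫ s in Ioi (0:ℝ), Ai (t+s) * Ai (ξ+s) := by
          simp_rw [mul_comm (Ai (ξ+_))]
      _ = ∫ s in Ioi (0:ℝ), FAi (η+s) * Ai (ξ+s) := swap_term η ξ
      _ = ∫ s in Ioi (0:ℝ), Ai (ξ+s) * FAi (η+s) := by simp_rw [mul_comm]
  rw [h1, h2, ← integral_add (integrableOn_FAi_mul_Ai ξ η) (integrableOn_Ai_mul_FAi ξ η)]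
  have hG : ∀ s ∈ Ici (0:ℝ), HasDerivAt (fun s => FAi (ξ+s) * FAi (η+s))
      (-(FAi (ξ+s) * Ai (η+s) + Ai (ξ+s) * FAi (η+s))) s := by
    intro s _
    have hx : HasDerivAt (fun s : ℝ => FAi (ξ+s)) (-(Ai (ξ+s))) s := by
      exact (hasDerivAt_FAi (ξ+s)).comp_const_add ξ s
    have hy : HasDerivAt (fun s : ℝ => FAi (η+s)) (-(Ai (η+s))) s := by
      exact (hasDerivAt_FAi (η+s)).comp_const_add η s
    have := hx.mul hy
    have e : -(FAi (ξ+s) * Ai (η+s) + Ai (ξ+s) * FAi (η+s))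
        = -Ai (ξ+s) * FAi (η+s) + FAi (ξ+s) * -Ai (η+s) := by ring
    rw [e]; exact this
  have hInt : IntegrableOn (fun s => -(FAi (ξ+s) * Ai (η+s) + Ai (ξ+s) * FAi (η+s))) (Ioi 0) :=
    ((integrableOn_FAi_mul_Ai ξ η).add (integrableOn_Ai_mul_FAi ξ η)).neg
  have hTend : Tendsto (fun s => FAi (ξ+s) * FAi (η+s)) atTop (𝓝 0) := by
    have t1 : Tendsto (fun s : ℝ => FAi (ξ+s)) atTop (𝓝 0) :=
      FAi_tendsto.comp (tendsto_atTop_add_const_left atTop ξ tendsto_id)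
    have t2 : Tendsto (fun s : ℝ => FAi (η+s)) atTop (𝓝 0) :=
      FAi_tendsto.comp (tendsto_atTop_add_const_left atTop η tendsto_id)
    simpa using t1.mul t2
  have key := integral_Ioi_of_hasDerivAt_of_tendsto' hG hInt hTend
  have hneg : (∫ s in Ioi (0:ℝ), (FAi (ξ+s) * Ai (η+s) + Ai (ξ+s) * FAi (η+s)))
      = -(∫ s in Ioi (0:ℝ), -(FAi (ξ+s) * Ai (η+s) + Ai (ξ+s) * FAi (η+s))) := by
    rw [integral_neg, neg_neg]
  rw [hneg, key]
  show -(0 - FAi (ξ+0) * FAi (η+0)) = FAi ξ * FAi η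
  simp
end

section
/- For every real η and every ε > 0: (1/(2πi)) ∫_{\bar{Γ}^∞} e^{−ηz + z³/3} (dz/z) = 1 − ∫_η^∞ Ai(t) dt, where \bar{Γ}^∞ runs from ∞·e^{iπ/3} inward along the ray of angle π/3 to (ε/2)e^{iπ/3}, then counterclockwise along the circle of radius ε/2 (through −ε/2, with the angle increasing from π/3 to 5π/3) to (ε/2)e^{−iπ/3}, then outward along the ray of angle −π/3 to ∞·e^{−iπ/3}. In particular the value is independent of ε. -/
open MeasureTheory Set Complex Filter

/-- exponential of cubic decay is integrable on rays -/
lemma ray_integrable (b a : ℝ) :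
    IntegrableOn (fun s : ℝ => Real.exp (b*s - s^3/3)) (Set.Ioi a) := by
  set M : ℝ := max a (3*(|b|+1)) with hM
  have hM1 : 1 ≤ M := le_trans (by nlinarith [abs_nonneg b] : (1:ℝ) ≤ 3*(|b|+1)) (le_max_right _ _)
  have h1 : IntegrableOn (fun s : ℝ => Real.exp (b*s - s^3/3)) (Set.Ioc a M) := by
    exact (Real.continuous_exp.comp (by continuity)).integrableOn_Ioc
  have h2 : IntegrableOn (fun s : ℝ => Real.exp (b*s - s^3/3)) (Set.Ioi M) := by
    refine Integrable.mono' (exp_neg_integrableOn_Ioi M one_pos)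
      ((Real.continuous_exp.comp (by continuity)).aestronglyMeasurable) ?_
    filter_upwards [ae_restrict_mem measurableSet_Ioi] with s hs
    have hsM : M < s := hs
    have hs1 : 1 ≤ s := le_trans hM1 hsM.le
    have hsb : 3*(|b|+1) ≤ s := le_trans (le_max_right _ _) hsM.le
    rw [Real.norm_eq_abs, abs_of_pos (Real.exp_pos _), Real.exp_le_exp]
    have hb : b*s ≤ |b| * s := mul_le_mul_of_nonneg_right (le_abs_self b) (by linarith)
    nlinarith [sq_nonneg s, sq_nonneg (s-1), abs_nonneg b]
  exact ((h1.union h2).mono_set (fun s hs => by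
    rcases le_or_gt s M with h | h
    · exact Or.inl ⟨hs, h⟩
    · exact Or.inr h))

/-- integrability of complex exponential on Ioi -/
lemma cexp_integrableOn (z : ℂ) (hz : 0 < z.re) (a : ℝ) :
    IntegrableOn (fun t : ℝ => Complex.exp (-(z * t))) (Set.Ioi a) := by
  refine Integrable.mono' (exp_neg_integrableOn_Ioi a hz)
    ((Complex.continuous_exp.comp (by continuity)).aestronglyMeasurable) ?_
  filter_upwards with t
  rw [Complex.norm_exp]
  simp [Complex.mul_re]

/-- value of complex exponential integral on Ioi -/
lemma cexp_integral_Ioi (z : ℂ) (hz : 0 < z.re) (a : ℝ) :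
    ∫ t in Set.Ioi a, Complex.exp (-(z * t)) = Complex.exp (-(z * a)) / z := by
  have hz0 : z ≠ 0 := fun h => by simp [h] at hz
  have key : ∀ x : ℝ, HasDerivAt (fun t : ℝ => -Complex.exp (-(z * t)) / z)
      (Complex.exp (-(z * x))) x := by
    intro x
    have h1 : HasDerivAt (fun w : ℂ => -Complex.exp (-(z * w)) / z)
        (Complex.exp (-(z * x))) (x : ℂ) := by
      have h3 : HasDerivAt (fun w : ℂ => Complex.exp (-(z * w)))
          (Complex.exp (-(z * x)) * (-z)) (x : ℂ) := by
        have h2 : HasDerivAt (fun w : ℂ => -(z * w)) (-z) (x : ℂ) := by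
          have h := ((hasDerivAt_id (x:ℂ)).const_mul z).neg
          simp only [id, mul_one] at h
          exact h
        exact (Complex.hasDerivAt_exp _).comp _ h2
      have h4 := (h3.div_const z).neg
      have h5 : -(Complex.exp (-(z * (x:ℂ))) * -z / z) = Complex.exp (-(z * (x:ℂ))) := by
        field_simp
      rw [← h5]
      rw [show (fun w : ℂ => -Complex.exp (-(z * w)) / z) = -(fun w : ℂ => Complex.exp (-(z * w)) / z) from by
        funext w; simp [neg_div]]
      exact h4
    exact h1.comp_ofReal
  have htend : Tendsto (fun t : ℝ => -Complex.exp (-(z * t)) / z) atTop (nhds 0) := by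
    rw [tendsto_zero_iff_norm_tendsto_zero]
    have heq : (fun t : ℝ => ‖-Complex.exp (-(z * t)) / z‖) =
        fun t : ℝ => Real.exp (-(z.re * t)) / ‖z‖ := by
      funext t
      rw [norm_div, norm_neg, Complex.norm_exp]
      congr 2
      simp [Complex.mul_re]
    rw [heq]
    have h5 : Tendsto (fun t : ℝ => z.re * t) atTop atTop :=
      Tendsto.const_mul_atTop hz tendsto_id
    have h6 := (Real.tendsto_exp_neg_atTop_nhds_zero.comp h5).div_const ‖z‖
    simpa using h6
  have := integral_Ioi_of_hasDerivAt_of_tendsto' (fun x _ => key x)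
    (cexp_integrableOn z hz a) htend
  rw [this]
  field_simp
  ring

section helpers
variable {c : ℂ}

lemma abs_c_one (hcu : c^3 = -1) : ‖c‖ = 1 := by
  have h : (‖c‖)^3 = 1 := by
    rw [← norm_pow, hcu]; simp
  nlinarith [norm_nonneg c, sq_nonneg (‖c‖ - 1), sq_nonneg (‖c‖ + 1)]

lemma c_ne_zero (hcu : c^3 = -1) : c ≠ 0 := by
  intro h; rw [h] at hcu; norm_num at hcu

lemma ray_norm (hre : c.re = 1/2) (hcu : c^3 = -1) (t s : ℝ) :
    ‖Complex.exp (-(t:ℂ) * ((s:ℂ)*c) + ((s:ℂ)*c)^3/3) * c‖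
      = Real.exp (-(t*s)/2 - s^3/3) := by
  rw [norm_mul, Complex.norm_exp, abs_c_one hcu,
    mul_one]
  congr 1
  have h3 : ((s:ℂ)*c)^3 = -((s^3 : ℝ) : ℂ) := by
    rw [mul_pow, hcu]; push_cast; ring
  rw [Complex.add_re, h3]
  have h1 : (-(t:ℂ) * ((s:ℂ)*c)).re = -(t*s) * c.re := by
    have : -(t:ℂ) * ((s:ℂ)*c) = ((-(t*s) : ℝ) : ℂ) * c := by push_cast; ring
    rw [this, Complex.re_ofReal_mul]
  have h2 : ((-((s^3 : ℝ) : ℂ))/3).re = -(s^3)/3 := by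
    have : (-((s^3 : ℝ) : ℂ))/3 = (((-(s^3)/3 : ℝ)) : ℂ) := by push_cast; ring
    rw [this, Complex.ofReal_re]
  rw [h1, h2, hre]
  ring

lemma ray_measurable (η : ℝ) (hcu : c^3 = -1) :
    Continuous (fun p : ℝ × ℝ =>
      Complex.exp (-(p.1:ℂ) * ((p.2:ℂ)*c) + ((p.2:ℂ)*c)^3/3) * c) := by
  fun_prop

lemma ray_prod_integrable (η a : ℝ) (ha : 0 < a) (hre : c.re = 1/2) (hcu : c^3 = -1) :
    Integrable (fun p : ℝ × ℝ =>
        Complex.exp (-(p.1:ℂ) * ((p.2:ℂ)*c) + ((p.2:ℂ)*c)^3/3) * c)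
      ((volume.restrict (Set.Ioi η)).prod (volume.restrict (Set.Ioi a))) := by
  have h1 : Integrable (fun t : ℝ => Real.exp ((a/2)*η) * Real.exp (-(a/2)*t))
      (volume.restrict (Set.Ioi η)) :=
    (exp_neg_integrableOn_Ioi η (by positivity)).const_mul _
  have h2 : Integrable (fun s : ℝ => Real.exp ((-η/2)*s - s^3/3))
      (volume.restrict (Set.Ioi a)) := ray_integrable _ _
  refine Integrable.mono' (h1.mul_prod h2) ((ray_measurable η hcu).aestronglyMeasurable) ?_
  rw [Measure.prod_restrict]
  filter_upwards [ae_restrict_mem ((measurableSet_Ioi).prod measurableSet_Ioi)] with p hp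
  obtain ⟨ht, hs⟩ := hp
  have ht' : η < p.1 := ht
  have hs' : a < p.2 := hs
  rw [ray_norm hre hcu]
  rw [← Real.exp_add, ← Real.exp_add, Real.exp_le_exp]
  nlinarith [hs'.le, ht'.le, ha.le]

lemma ray_swap (η a : ℝ) (ha : 0 < a) (hre : c.re = 1/2) (hcu : c^3 = -1) :
    ∫ t in Set.Ioi η, ∫ s in Set.Ioi a,
        Complex.exp (-(t:ℂ) * ((s:ℂ)*c) + ((s:ℂ)*c)^3/3) * c
      = ∫ s in Set.Ioi a,
          (Complex.exp (-(η:ℂ) * ((s:ℂ)*c) + ((s:ℂ)*c)^3/3) / ((s:ℂ)*c)) * c := by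
  rw [MeasureTheory.integral_integral_swap (ray_prod_integrable η a ha hre hcu)]
  refine setIntegral_congr_fun measurableSet_Ioi (fun s hs => ?_)
  have hs' : (0:ℝ) < s := lt_trans ha hs
  have hz : (0:ℝ) < ((s:ℂ)*c).re := by
    rw [Complex.re_ofReal_mul, hre]; linarith
  have hz0 : (s:ℂ)*c ≠ 0 := mul_ne_zero (by exact_mod_cast hs'.ne') (c_ne_zero hcu)
  have step1 : ∀ t : ℝ, Complex.exp (-(t:ℂ) * ((s:ℂ)*c) + ((s:ℂ)*c)^3/3) * c
      = Complex.exp (-(((s:ℂ)*c) * t)) * (Complex.exp (((s:ℂ)*c)^3/3) * c) := by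
    intro t; rw [Complex.exp_add]; ring_nf
  simp_rw [step1]
  rw [MeasureTheory.integral_mul_const, cexp_integral_Ioi _ hz]
  have e1 : Complex.exp (-((s:ℂ) * c * (η:ℂ))) * (Complex.exp (((s:ℂ) * c) ^ 3 / 3) * c)
      = Complex.exp (-(η:ℂ) * ((s:ℂ) * c) + ((s:ℂ) * c) ^ 3 / 3) * c := by
    rw [← mul_assoc, ← Complex.exp_add]
    congr 2
    ring
  rw [div_mul_eq_mul_div, e1, div_mul_eq_mul_div]

end helpers
section arc
open Real in
lemma cos_ge_half {θ : ℝ} (h : θ ∈ Set.Ioc (-(Real.pi/3)) (Real.pi/3)) :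
    1/2 ≤ Real.cos θ := by
  have h1 : |θ| ≤ Real.pi/3 := abs_le.mpr ⟨h.1.le, h.2⟩
  have h2 : Real.cos (Real.pi/3) ≤ Real.cos |θ| :=
    Real.cos_le_cos_of_nonneg_of_le_pi (abs_nonneg θ)
      (by linarith [Real.pi_pos]) h1
  rw [Real.cos_abs] at h2
  rw [← Real.cos_pi_div_three]
  exact h2

lemma arc_exponent_re (t θ : ℝ) :
    (-(t:ℂ) * Complex.exp ((θ:ℂ)*Complex.I)
      + (Complex.exp ((θ:ℂ)*Complex.I))^3/3).re
    = -t * Real.cos θ + Real.cos (3*θ) / 3 := by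
  have h3 : (Complex.exp ((θ:ℂ)*Complex.I))^3 = Complex.exp (((3*θ : ℝ):ℂ)*Complex.I) := by
    rw [← Complex.exp_nat_mul]; push_cast; ring_nf
  rw [Complex.add_re, h3]
  have h1 : (-(t:ℂ) * Complex.exp ((θ:ℂ)*Complex.I)).re
      = -t * (Complex.exp ((θ:ℂ)*Complex.I)).re := by
    have : -(t:ℂ) = ((-t : ℝ) : ℂ) := by push_cast; ring
    rw [this, Complex.re_ofReal_mul]
  have h2 : (Complex.exp (((3*θ : ℝ):ℂ)*Complex.I) / 3).re
      = (Complex.exp (((3*θ : ℝ):ℂ)*Complex.I)).re / 3 := by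
    rw [Complex.div_ofNat_re]
  rw [h1, h2, Complex.exp_ofReal_mul_I_re, Complex.exp_ofReal_mul_I_re]

lemma arc_norm (t θ : ℝ) :
    ‖Complex.exp (-(t:ℂ) * Complex.exp ((θ:ℂ)*Complex.I)
        + (Complex.exp ((θ:ℂ)*Complex.I))^3/3) * (Complex.I * Complex.exp ((θ:ℂ)*Complex.I))‖
      = Real.exp (-t * Real.cos θ + Real.cos (3*θ) / 3) := by
  rw [norm_mul, norm_mul,
    Complex.norm_exp, Complex.norm_I, Complex.norm_exp_ofReal_mul_I, one_mul, mul_one,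
    arc_exponent_re]

lemma arc_prod_integrable (η : ℝ) :
    Integrable (fun p : ℝ × ℝ =>
        Complex.exp (-(p.1:ℂ) * Complex.exp ((p.2:ℂ)*Complex.I)
            + (Complex.exp ((p.2:ℂ)*Complex.I))^3/3)
          * (Complex.I * Complex.exp ((p.2:ℂ)*Complex.I)))
      ((volume.restrict (Set.Ioi η)).prod
        (volume.restrict (Set.Ioc (-(Real.pi/3)) (Real.pi/3)))) := by
  have h1 : Integrable (fun t : ℝ => Real.exp (1/3 + |η|/2) * Real.exp (-(1/2)*t))
      (volume.restrict (Set.Ioi η)) :=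
    (exp_neg_integrableOn_Ioi η (by norm_num)).const_mul _
  have h2 : Integrable (fun _ : ℝ => (1:ℝ))
      (volume.restrict (Set.Ioc (-(Real.pi/3)) (Real.pi/3))) := by
    exact integrableOn_const (by rw [Real.volume_Ioc]; exact ENNReal.ofReal_ne_top)
  have hmeas : Continuous (fun p : ℝ × ℝ =>
      Complex.exp (-(p.1:ℂ) * Complex.exp ((p.2:ℂ)*Complex.I)
          + (Complex.exp ((p.2:ℂ)*Complex.I))^3/3)
        * (Complex.I * Complex.exp ((p.2:ℂ)*Complex.I))) := by fun_prop
  refine Integrable.mono' (by simpa using h1.mul_prod h2) hmeas.aestronglyMeasurable ?_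
  rw [Measure.prod_restrict]
  filter_upwards [ae_restrict_mem (measurableSet_Ioi.prod measurableSet_Ioc)] with p hp
  obtain ⟨ht, hθ⟩ := hp
  have ht' : η < p.1 := ht
  have hcos : 1/2 ≤ Real.cos p.2 := cos_ge_half hθ
  have hcos1 : Real.cos p.2 ≤ 1 := Real.cos_le_one _
  have hcos3 : Real.cos (3*p.2) ≤ 1 := Real.cos_le_one _
  rw [arc_norm, ← Real.exp_add, Real.exp_le_exp]
  rcases le_or_gt 0 p.1 with h | h
  · nlinarith [abs_nonneg η]
  · have : -p.1 ≤ |η| := by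
      rw [← abs_neg]
      exact le_trans (by linarith) (le_abs_self (-η)) |>.trans (le_refl _) |>.trans (le_refl _)
    nlinarith

lemma arc_swap (η : ℝ) :
    ∫ t in Set.Ioi η, ∫ θ in Set.Ioc (-(Real.pi/3)) (Real.pi/3),
        Complex.exp (-(t:ℂ) * Complex.exp ((θ:ℂ)*Complex.I)
            + (Complex.exp ((θ:ℂ)*Complex.I))^3/3)
          * (Complex.I * Complex.exp ((θ:ℂ)*Complex.I))
      = ∫ θ in Set.Ioc (-(Real.pi/3)) (Real.pi/3),
          Complex.I * Complex.exp (-(η:ℂ) * Complex.exp ((θ:ℂ)*Complex.I)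
            + (Complex.exp ((θ:ℂ)*Complex.I))^3/3) := by
  rw [MeasureTheory.integral_integral_swap (arc_prod_integrable η)]
  refine setIntegral_congr_fun measurableSet_Ioc (fun θ hθ => ?_)
  set z : ℂ := Complex.exp ((θ:ℂ)*Complex.I) with hzdef
  have hz : (0:ℝ) < z.re := by
    rw [hzdef, Complex.exp_ofReal_mul_I_re]
    linarith [cos_ge_half hθ]
  have hz0 : z ≠ 0 := Complex.exp_ne_zero _
  have step1 : ∀ t : ℝ, Complex.exp (-(t:ℂ) * z + z^3/3) * (Complex.I * z)
      = Complex.exp (-(z * t)) * (Complex.exp (z^3/3) * (Complex.I * z)) := by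
    intro t; rw [Complex.exp_add]; ring_nf
  simp_rw [step1]
  rw [MeasureTheory.integral_mul_const, cexp_integral_Ioi _ hz]
  rw [div_mul_eq_mul_div]
  have e1 : Complex.exp (-(z * (η:ℂ))) * (Complex.exp (z ^ 3 / 3) * (Complex.I * z))
      = Complex.I * Complex.exp (-(η:ℂ) * z + z ^ 3 / 3) * z := by
    rw [show Complex.exp (-(z * (η:ℂ))) * (Complex.exp (z ^ 3 / 3) * (Complex.I * z))
        = (Complex.exp (-(z * (η:ℂ))) * Complex.exp (z ^ 3 / 3)) * (Complex.I * z) from by ring,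
      ← Complex.exp_add,
      show -(z * (η:ℂ)) + z ^ 3 / 3 = -(η:ℂ) * z + z ^ 3 / 3 from by ring]
    ring
  rw [e1, mul_div_assoc]
  rw [div_self hz0, mul_one]
end arc
section contour

lemma Ioi_sub_Ioi {f : ℝ → ℂ} {a b : ℝ} (hf : IntegrableOn f (Set.Ioi (min a b))) :
    (∫ x in Set.Ioi a, f x) - (∫ x in Set.Ioi b, f x) = ∫ x in a..b, f x := by
  rcases le_total a b with h | h
  · rw [min_eq_left h] at hf
    have hsplit : Set.Ioc a b ∪ Set.Ioi b = Set.Ioi a := Set.Ioc_union_Ioi_eq_Ioi h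
    have hu := MeasureTheory.setIntegral_union (Set.Ioc_disjoint_Ioi le_rfl)
      measurableSet_Ioi (hf.mono_set Set.Ioc_subset_Ioi_self)
      (hf.mono_set (Set.Ioi_subset_Ioi h))
    rw [hsplit] at hu
    rw [hu, intervalIntegral.integral_of_le h]
    ring
  · rw [min_eq_right h] at hf
    have hsplit : Set.Ioc b a ∪ Set.Ioi a = Set.Ioi b := Set.Ioc_union_Ioi_eq_Ioi h
    have hu := MeasureTheory.setIntegral_union (Set.Ioc_disjoint_Ioi le_rfl)
      measurableSet_Ioi (hf.mono_set Set.Ioc_subset_Ioi_self)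
      (hf.mono_set (Set.Ioi_subset_Ioi h))
    rw [hsplit] at hu
    rw [intervalIntegral.integral_symm, intervalIntegral.integral_of_le h, hu]
    ring

lemma rayI_s17 (η m : ℝ) (hm : 0 < m) {c : ℂ} (hre : c.re = 1/2) (hcu : c^3 = -1) :
    IntegrableOn (fun s : ℝ =>
      (Complex.exp (-(η:ℂ) * ((s:ℂ)*c) + ((s:ℂ)*c)^3/3) / ((s:ℂ)*c)) * c)
      (Set.Ioi m) := by
  have hc0 := c_ne_zero hcu
  have hcont : ContinuousOn (fun s : ℝ =>
      (Complex.exp (-(η:ℂ) * ((s:ℂ)*c) + ((s:ℂ)*c)^3/3) / ((s:ℂ)*c)) * c)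
      (Set.Ioi m) := by
    apply ContinuousOn.mul _ continuousOn_const
    apply ContinuousOn.div
    · exact Continuous.continuousOn (by fun_prop)
    · exact Continuous.continuousOn (by fun_prop)
    · intro s hs
      exact mul_ne_zero (Complex.ofReal_ne_zero.mpr (lt_trans hm hs).ne') hc0
  refine MeasureTheory.Integrable.mono'
    (((ray_integrable (-η/2) m).const_mul (1/m)))
    (hcont.aestronglyMeasurable measurableSet_Ioi) ?_
  filter_upwards [MeasureTheory.ae_restrict_mem measurableSet_Ioi] with s hs
  have hs' : (0:ℝ) < s := lt_trans hm hs
  have hrw : (Complex.exp (-(η:ℂ) * ((s:ℂ)*c) + ((s:ℂ)*c)^3/3) / ((s:ℂ)*c)) * c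
      = (Complex.exp (-(η:ℂ) * ((s:ℂ)*c) + ((s:ℂ)*c)^3/3) * c) / ((s:ℂ)*c) := by
    ring
  rw [hrw, norm_div, ray_norm hre hcu]
  have hnorm : ‖(s:ℂ)*c‖ = s := by
    rw [norm_mul, Complex.norm_real, Real.norm_eq_abs,
      abs_c_one hcu, abs_of_pos hs', mul_one]
  rw [hnorm, div_le_iff₀ hs', show -(η*s)/2 - s^3/3 = -η/2*s - s^3/3 from by ring]
  have hE := (Real.exp_pos (-η/2*s - s^3/3)).le
  have hms : m < s := hs
  have h2 : (1:ℝ) ≤ 1/m * s := by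
    rw [div_mul_eq_mul_div, one_mul, le_div_iff₀ hm]; linarith
  nlinarith [Real.exp_pos (-η * s / 2 - s ^ 3 / 3)]

end contour
section rect

lemma exp_log_side (η u : ℝ) (hu : 0 < u) (φ : ℂ) :
    (∫ x in Real.log u..(0:ℝ),
        Complex.exp (-(η:ℂ) * Complex.exp ((x:ℂ) + φ) + (Complex.exp ((x:ℂ) + φ))^3/3))
      = ∫ t in u..(1:ℝ),
          Complex.exp (-(η:ℂ) * ((t:ℂ) * Complex.exp φ)
            + ((t:ℂ) * Complex.exp φ)^3/3) / (t:ℂ) := by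
  have hg : Continuous (fun x : ℝ =>
      Complex.exp (-(η:ℂ) * Complex.exp ((x:ℂ) + φ) + (Complex.exp ((x:ℂ) + φ))^3/3)) := by
    fun_prop
  have hpos : ∀ t ∈ Set.uIcc u 1, (0:ℝ) < t := by
    intro t ht
    rcases Set.mem_uIcc.mp ht with h | h
    · exact lt_of_lt_of_le hu h.1
    · exact lt_of_lt_of_le one_pos h.1
  have hderiv : ∀ t ∈ Set.uIcc u 1, HasDerivAt Real.log t⁻¹ t :=
    fun t ht => Real.hasDerivAt_log (hpos t ht).ne'
  have hcont : ContinuousOn (fun t : ℝ => t⁻¹) (Set.uIcc u 1) :=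
    ContinuousOn.inv₀ continuousOn_id (fun t ht => (hpos t ht).ne')
  have hsub := intervalIntegral.integral_comp_smul_deriv hderiv hcont hg
  rw [Real.log_one] at hsub
  rw [← hsub]
  apply intervalIntegral.integral_congr
  intro t ht
  have ht' := hpos t ht
  have hexp : Complex.exp ((Real.log t : ℂ) + φ) = (t:ℂ) * Complex.exp φ := by
    rw [Complex.exp_add, ← Complex.ofReal_exp, Real.exp_log ht']
  simp only [Function.comp, hexp, Complex.real_smul, Complex.ofReal_inv]
  exact (div_eq_inv_mul _ _).symm

lemma circle_value (η : ℝ) :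
    Complex.I * (∫ θ in (0:ℝ)..(2*Real.pi),
        Complex.exp (-(η:ℂ) * Complex.exp ((θ:ℂ)*Complex.I)
          + (Complex.exp ((θ:ℂ)*Complex.I))^3/3))
      = 2*(Real.pi:ℂ)*Complex.I := by
  set f : ℂ → ℂ := fun z => Complex.exp (-(η:ℂ) * z + z^3/3) with hf
  have hd : DifferentiableOn ℂ f (Metric.closedBall 0 1) := by
    apply Differentiable.differentiableOn
    fun_prop
  have h := hd.circleIntegral_sub_inv_smul (show (0:ℂ) ∈ Metric.ball 0 1 by simp)
  rw [circleIntegral] at h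
  simp only [deriv_circleMap, circleMap, Complex.ofReal_one, one_mul, zero_add, sub_zero,
    smul_eq_mul] at h
  have h0 : f 0 = 1 := by simp [hf]
  rw [h0, mul_one] at h
  have hcongr : ∀ θ ∈ Set.uIcc (0:ℝ) (2*Real.pi),
      Complex.exp ((θ:ℂ)*Complex.I) * Complex.I
        * ((Complex.exp ((θ:ℂ)*Complex.I))⁻¹ * f (Complex.exp ((θ:ℂ)*Complex.I)))
      = Complex.I * f (Complex.exp ((θ:ℂ)*Complex.I)) := by
    intro θ _
    field_simp [Complex.exp_ne_zero]
  rw [intervalIntegral.integral_congr hcongr, intervalIntegral.integral_const_mul] at h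
  exact h

lemma per_shift (η : ℝ) :
    (∫ θ in (-(Real.pi/3))..(5*Real.pi/3),
        Complex.exp (-(η:ℂ) * Complex.exp ((θ:ℂ)*Complex.I)
          + (Complex.exp ((θ:ℂ)*Complex.I))^3/3))
      = ∫ θ in (0:ℝ)..(2*Real.pi),
          Complex.exp (-(η:ℂ) * Complex.exp ((θ:ℂ)*Complex.I)
            + (Complex.exp ((θ:ℂ)*Complex.I))^3/3) := by
  have hper : Function.Periodic (fun θ : ℝ =>
      Complex.exp (-(η:ℂ) * Complex.exp ((θ:ℂ)*Complex.I)
        + (Complex.exp ((θ:ℂ)*Complex.I))^3/3)) (2*Real.pi) := by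
    intro θ
    have : Complex.exp (((θ + 2*Real.pi : ℝ):ℂ)*Complex.I)
        = Complex.exp ((θ:ℂ)*Complex.I) := by
      push_cast
      rw [add_mul, Complex.exp_add, Complex.exp_two_pi_mul_I, mul_one]
    simp only [this]
  have h := hper.intervalIntegral_add_eq (-(Real.pi/3)) 0
  rw [show -(Real.pi/3) + 2*Real.pi = 5*Real.pi/3 from by ring, zero_add] at h
  exact h

end rect
section rectid

lemma exp_5pi3 : Complex.exp (((5*Real.pi/3:ℝ):ℂ)*Complex.I)
    = Complex.exp (-((Real.pi/3:ℝ):ℂ)*Complex.I) := by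
  rw [show ((5*Real.pi/3:ℝ):ℂ)*Complex.I
      = -((Real.pi/3:ℝ):ℂ)*Complex.I + 2*(Real.pi:ℂ)*Complex.I from by push_cast; ring,
    Complex.exp_add, Complex.exp_two_pi_mul_I, mul_one]

lemma rect_identity (η ε : ℝ) (hε : 0 < ε) :
    (∫ t in (ε/2)..(1:ℝ),
        Complex.exp (-(η:ℂ) * ((t:ℂ) * Complex.exp (((Real.pi/3:ℝ):ℂ)*Complex.I))
          + ((t:ℂ)*Complex.exp (((Real.pi/3:ℝ):ℂ)*Complex.I))^3/3) / (t:ℂ))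
    - (∫ t in (ε/2)..(1:ℝ),
        Complex.exp (-(η:ℂ) * ((t:ℂ) * Complex.exp (-((Real.pi/3:ℝ):ℂ)*Complex.I))
          + ((t:ℂ)*Complex.exp (-((Real.pi/3:ℝ):ℂ)*Complex.I))^3/3) / (t:ℂ))
    - Complex.I * (∫ θ in (-(Real.pi/3))..(Real.pi/3),
        Complex.exp (-(η:ℂ) * Complex.exp ((θ:ℂ)*Complex.I)
          + (Complex.exp ((θ:ℂ)*Complex.I))^3/3))
    + 2*(Real.pi:ℂ)*Complex.I
    - Complex.I * (∫ y in (Real.pi/3)..(5*Real.pi/3),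
        Complex.exp (-(η:ℂ) * (((ε/2:ℝ):ℂ) * Complex.exp ((y:ℂ)*Complex.I))
          + ((((ε/2:ℝ):ℂ)) * Complex.exp ((y:ℂ)*Complex.I))^3/3)) = 0 := by
  have hε2 : (0:ℝ) < ε/2 := by linarith
  set F : ℂ → ℂ := fun w => Complex.exp (-(η:ℂ) * Complex.exp w + (Complex.exp w)^3/3)
    with hF
  have hFc : Continuous F := by fun_prop
  have hFd : Differentiable ℂ F := by fun_prop
  have hrect := Complex.integral_boundary_rect_eq_zero_of_continuousOn_of_differentiableOn F
    (⟨Real.log (ε/2), Real.pi/3⟩ : ℂ) (⟨0, 5*Real.pi/3⟩ : ℂ)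
    hFc.continuousOn hFd.differentiableOn
  simp only [smul_eq_mul] at hrect
  -- the four sides
  have h1 : (∫ x in Real.log (ε/2)..(0:ℝ), F ((x:ℂ) + ((Real.pi/3:ℝ):ℂ)*Complex.I))
      = ∫ t in (ε/2)..(1:ℝ),
          Complex.exp (-(η:ℂ) * ((t:ℂ) * Complex.exp (((Real.pi/3:ℝ):ℂ)*Complex.I))
            + ((t:ℂ)*Complex.exp (((Real.pi/3:ℝ):ℂ)*Complex.I))^3/3) / (t:ℂ) :=
    exp_log_side η (ε/2) hε2 _
  have h2 : (∫ x in Real.log (ε/2)..(0:ℝ), F ((x:ℂ) + ((5*Real.pi/3:ℝ):ℂ)*Complex.I))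
      = ∫ t in (ε/2)..(1:ℝ),
          Complex.exp (-(η:ℂ) * ((t:ℂ) * Complex.exp (-((Real.pi/3:ℝ):ℂ)*Complex.I))
            + ((t:ℂ)*Complex.exp (-((Real.pi/3:ℝ):ℂ)*Complex.I))^3/3) / (t:ℂ) := by
    rw [exp_log_side η (ε/2) hε2 _, exp_5pi3]
  have h4 : (∫ y in (Real.pi/3)..(5*Real.pi/3), F (((Real.log (ε/2):ℝ):ℂ) + (y:ℂ)*Complex.I))
      = ∫ y in (Real.pi/3)..(5*Real.pi/3),
          Complex.exp (-(η:ℂ) * (((ε/2:ℝ):ℂ) * Complex.exp ((y:ℂ)*Complex.I))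
            + ((((ε/2:ℝ):ℂ)) * Complex.exp ((y:ℂ)*Complex.I))^3/3) := by
    apply intervalIntegral.integral_congr
    intro y _
    have : Complex.exp (((Real.log (ε/2):ℝ):ℂ) + (y:ℂ)*Complex.I)
        = ((ε/2:ℝ):ℂ) * Complex.exp ((y:ℂ)*Complex.I) := by
      rw [Complex.exp_add, ← Complex.ofReal_exp, Real.exp_log hε2]
    simp only [hF, this]
  have hone_cont : Continuous (fun θ : ℝ =>
      Complex.exp (-(η:ℂ) * Complex.exp ((θ:ℂ)*Complex.I)
        + (Complex.exp ((θ:ℂ)*Complex.I))^3/3)) := by fun_prop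
  have h3 : (∫ y in (Real.pi/3)..(5*Real.pi/3), F ((0:ℂ) + (y:ℂ)*Complex.I))
      = (∫ θ in (Real.pi/3)..(-(Real.pi/3)),
          Complex.exp (-(η:ℂ) * Complex.exp ((θ:ℂ)*Complex.I)
            + (Complex.exp ((θ:ℂ)*Complex.I))^3/3))
        + ∫ θ in (0:ℝ)..(2*Real.pi),
            Complex.exp (-(η:ℂ) * Complex.exp ((θ:ℂ)*Complex.I)
              + (Complex.exp ((θ:ℂ)*Complex.I))^3/3) := by
    have heq : (∫ y in (Real.pi/3)..(5*Real.pi/3), F ((0:ℂ) + (y:ℂ)*Complex.I))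
        = ∫ y in (Real.pi/3)..(5*Real.pi/3),
            Complex.exp (-(η:ℂ) * Complex.exp ((y:ℂ)*Complex.I)
              + (Complex.exp ((y:ℂ)*Complex.I))^3/3) := by
      apply intervalIntegral.integral_congr
      intro y _
      simp only [hF, zero_add]
    rw [heq, ← per_shift η]
    rw [← intervalIntegral.integral_add_adjacent_intervals
      (hone_cont.intervalIntegrable (Real.pi/3) (-(Real.pi/3)))
      (hone_cont.intervalIntegrable (-(Real.pi/3)) (5*Real.pi/3))]
  -- assemble
  rw [Complex.ofReal_zero] at hrect
  rw [h1, h2, h3, h4] at hrect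
  have hflip : (∫ θ in (Real.pi/3)..(-(Real.pi/3)),
      Complex.exp (-(η:ℂ) * Complex.exp ((θ:ℂ)*Complex.I)
        + (Complex.exp ((θ:ℂ)*Complex.I))^3/3))
      = -(∫ θ in (-(Real.pi/3))..(Real.pi/3),
          Complex.exp (-(η:ℂ) * Complex.exp ((θ:ℂ)*Complex.I)
            + (Complex.exp ((θ:ℂ)*Complex.I))^3/3)) :=
    intervalIntegral.integral_symm _ _
  rw [hflip] at hrect
  have hcv := circle_value η
  linear_combination hrect - hcv

end rectid
section final

lemma c1_re : (Complex.exp (((Real.pi/3 : ℝ) : ℂ)*Complex.I)).re = 1/2 := by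
  rw [Complex.exp_ofReal_mul_I_re, Real.cos_pi_div_three]

lemma c1_cube : (Complex.exp (((Real.pi/3 : ℝ) : ℂ)*Complex.I))^3 = -1 := by
  rw [← Complex.exp_nat_mul,
    show ((3:ℕ):ℂ) * (((Real.pi/3 : ℝ):ℂ)*Complex.I) = (Real.pi:ℂ)*Complex.I from by
      push_cast; ring,
    Complex.exp_pi_mul_I]

lemma c2_re : (Complex.exp (-((Real.pi/3 : ℝ) : ℂ)*Complex.I)).re = 1/2 := by
  rw [show -((Real.pi/3 : ℝ):ℂ)*Complex.I = (((-(Real.pi/3) : ℝ)):ℂ)*Complex.I from by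
      push_cast; ring,
    Complex.exp_ofReal_mul_I_re, Real.cos_neg, Real.cos_pi_div_three]

lemma c2_cube : (Complex.exp (-((Real.pi/3 : ℝ) : ℂ)*Complex.I))^3 = -1 := by
  rw [← Complex.exp_nat_mul,
    show ((3:ℕ):ℂ) * (-((Real.pi/3 : ℝ):ℂ)*Complex.I) = -((Real.pi:ℂ)*Complex.I) from by
      push_cast; ring,
    Complex.exp_neg, Complex.exp_pi_mul_I]
  norm_num

lemma div_c_trick (A t c : ℂ) (hc : c ≠ 0) : A / (t*c) * c = A / t := by
  rw [div_mul_eq_mul_div, mul_div_mul_right _ _ hc]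

lemma div_mul_trick (A r e : ℂ) (hre : r * e ≠ 0) :
    A / (r*e) * (Complex.I * r * e) = Complex.I * A := by
  rw [div_mul_eq_mul_div,
    show A * (Complex.I*r*e) = Complex.I * A * (r*e) from by ring,
    mul_div_assoc, div_self hre, mul_one]

lemma uIcc_pos {u t : ℝ} (hu : 0 < u) (ht : t ∈ Set.uIcc u 1) : 0 < t := by
  rcases Set.mem_uIcc.mp ht with h | h
  · exact lt_of_lt_of_le hu h.1
  · exact lt_of_lt_of_le one_pos h.1

end final

theorem stmt17 (η ε : ℝ) (hε : 0 < ε) :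
    (1/(2*(Real.pi:ℂ)*Complex.I)) *
      (-(∫ t in Set.Ioi (ε/2),
            (Complex.exp (-(η:ℂ) * ((t:ℂ) * Complex.exp (((Real.pi/3 : ℝ) : ℂ)*Complex.I))
                + ((t:ℂ) * Complex.exp (((Real.pi/3 : ℝ) : ℂ)*Complex.I))^3/3) /
              ((t:ℂ) * Complex.exp (((Real.pi/3 : ℝ) : ℂ)*Complex.I))) *
              Complex.exp (((Real.pi/3 : ℝ) : ℂ)*Complex.I))
        + (∫ θ in (Real.pi/3)..(5*Real.pi/3),
            (Complex.exp (-(η:ℂ) * (((ε/2 : ℝ) : ℂ) * Complex.exp ((θ:ℂ)*Complex.I))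
                + (((ε/2 : ℝ) : ℂ) * Complex.exp ((θ:ℂ)*Complex.I))^3/3) /
              (((ε/2 : ℝ) : ℂ) * Complex.exp ((θ:ℂ)*Complex.I))) *
              (Complex.I * ((ε/2 : ℝ) : ℂ) * Complex.exp ((θ:ℂ)*Complex.I)))
        + ∫ t in Set.Ioi (ε/2),
            (Complex.exp (-(η:ℂ) * ((t:ℂ) * Complex.exp (-((Real.pi/3 : ℝ) : ℂ)*Complex.I))
                + ((t:ℂ) * Complex.exp (-((Real.pi/3 : ℝ) : ℂ)*Complex.I))^3/3) /
              ((t:ℂ) * Complex.exp (-((Real.pi/3 : ℝ) : ℂ)*Complex.I))) *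
              Complex.exp (-((Real.pi/3 : ℝ) : ℂ)*Complex.I)) =
    1 - ∫ t in Set.Ioi η, Ai t := by
  have hε2 : (0:ℝ) < ε/2 := by linarith
  have hπpos := Real.pi_pos
  have hc1ne : Complex.exp (((Real.pi/3 : ℝ) : ℂ)*Complex.I) ≠ 0 := Complex.exp_ne_zero _
  have hc2ne : Complex.exp (-((Real.pi/3 : ℝ) : ℂ)*Complex.I) ≠ 0 := Complex.exp_ne_zero _
  -- Step 1 : compute the RHS integral of Ai via Fubini
  have hI1 : Integrable (fun t : ℝ => ∫ s in Set.Ioi (1:ℝ),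
      Complex.exp (-(t:ℂ) * ((s:ℂ) * Complex.exp (((Real.pi/3 : ℝ) : ℂ)*Complex.I))
          + ((s:ℂ) * Complex.exp (((Real.pi/3 : ℝ) : ℂ)*Complex.I))^3/3) *
        Complex.exp (((Real.pi/3 : ℝ) : ℂ)*Complex.I)) (volume.restrict (Set.Ioi η)) :=
    (ray_prod_integrable η 1 one_pos c1_re c1_cube).integral_prod_left
  have hI3 : Integrable (fun t : ℝ => ∫ s in Set.Ioi (1:ℝ),
      Complex.exp (-(t:ℂ) * ((s:ℂ) * Complex.exp (-((Real.pi/3 : ℝ) : ℂ)*Complex.I))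
          + ((s:ℂ) * Complex.exp (-((Real.pi/3 : ℝ) : ℂ)*Complex.I))^3/3) *
        Complex.exp (-((Real.pi/3 : ℝ) : ℂ)*Complex.I)) (volume.restrict (Set.Ioi η)) :=
    (ray_prod_integrable η 1 one_pos c2_re c2_cube).integral_prod_left
  have hI2 : Integrable (fun t : ℝ => ∫ θ in Set.Ioc (-(Real.pi/3)) (Real.pi/3),
      Complex.exp (-(t:ℂ) * Complex.exp ((θ:ℂ)*Complex.I)
          + (Complex.exp ((θ:ℂ)*Complex.I))^3/3) *
        (Complex.I * Complex.exp ((θ:ℂ)*Complex.I))) (volume.restrict (Set.Ioi η)) :=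
    (arc_prod_integrable η).integral_prod_left
  have hRHS : (∫ t in Set.Ioi η, Ai t)
      = -(1/(2*(Real.pi:ℂ)*Complex.I)) *
        (-(∫ s in Set.Ioi (1:ℝ),
              (Complex.exp (-(η:ℂ) * ((s:ℂ) * Complex.exp (((Real.pi/3 : ℝ) : ℂ)*Complex.I))
                  + ((s:ℂ) * Complex.exp (((Real.pi/3 : ℝ) : ℂ)*Complex.I))^3/3) /
                ((s:ℂ) * Complex.exp (((Real.pi/3 : ℝ) : ℂ)*Complex.I))) *
                Complex.exp (((Real.pi/3 : ℝ) : ℂ)*Complex.I))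
          + (-(∫ θ in Set.Ioc (-(Real.pi/3)) (Real.pi/3),
              Complex.I * Complex.exp (-(η:ℂ) * Complex.exp ((θ:ℂ)*Complex.I)
                + (Complex.exp ((θ:ℂ)*Complex.I))^3/3)))
          + ∫ s in Set.Ioi (1:ℝ),
              (Complex.exp (-(η:ℂ) * ((s:ℂ) * Complex.exp (-((Real.pi/3 : ℝ) : ℂ)*Complex.I))
                  + ((s:ℂ) * Complex.exp (-((Real.pi/3 : ℝ) : ℂ)*Complex.I))^3/3) /
                ((s:ℂ) * Complex.exp (-((Real.pi/3 : ℝ) : ℂ)*Complex.I))) *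
                Complex.exp (-((Real.pi/3 : ℝ) : ℂ)*Complex.I)) := by
    simp only [Ai]
    rw [MeasureTheory.integral_const_mul]
    congr 1
    have hA2eq : ∀ t : ℝ, (∫ θ in (Real.pi/3)..(-(Real.pi/3)),
        Complex.exp (-(t:ℂ) * Complex.exp ((θ:ℂ)*Complex.I)
            + (Complex.exp ((θ:ℂ)*Complex.I))^3/3) *
          (Complex.I * Complex.exp ((θ:ℂ)*Complex.I)))
        = -∫ θ in Set.Ioc (-(Real.pi/3)) (Real.pi/3),
            Complex.exp (-(t:ℂ) * Complex.exp ((θ:ℂ)*Complex.I)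
                + (Complex.exp ((θ:ℂ)*Complex.I))^3/3) *
              (Complex.I * Complex.exp ((θ:ℂ)*Complex.I)) := by
      intro t
      rw [intervalIntegral.integral_symm,
        intervalIntegral.integral_of_le (by linarith : -(Real.pi/3) ≤ Real.pi/3)]
    simp_rw [hA2eq]
    have hadd1 := MeasureTheory.integral_add (μ := volume.restrict (Set.Ioi η))
      (hI1.neg.add hI2.neg) hI3
    have hadd2 := MeasureTheory.integral_add (μ := volume.restrict (Set.Ioi η))
      hI1.neg hI2.neg
    simp only [Pi.add_apply, Pi.neg_apply] at hadd1 hadd2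
    rw [hadd1, hadd2, MeasureTheory.integral_neg, MeasureTheory.integral_neg]
    rw [ray_swap η 1 one_pos c1_re c1_cube, ray_swap η 1 one_pos c2_re c2_cube, arc_swap η]
  rw [hRHS]
  -- Step 2 : ray differences
  have e1 : (∫ t in Set.Ioi (ε/2),
        (Complex.exp (-(η:ℂ) * ((t:ℂ) * Complex.exp (((Real.pi/3 : ℝ) : ℂ)*Complex.I))
            + ((t:ℂ) * Complex.exp (((Real.pi/3 : ℝ) : ℂ)*Complex.I))^3/3) /
          ((t:ℂ) * Complex.exp (((Real.pi/3 : ℝ) : ℂ)*Complex.I))) *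
          Complex.exp (((Real.pi/3 : ℝ) : ℂ)*Complex.I))
      - (∫ s in Set.Ioi (1:ℝ),
        (Complex.exp (-(η:ℂ) * ((s:ℂ) * Complex.exp (((Real.pi/3 : ℝ) : ℂ)*Complex.I))
            + ((s:ℂ) * Complex.exp (((Real.pi/3 : ℝ) : ℂ)*Complex.I))^3/3) /
          ((s:ℂ) * Complex.exp (((Real.pi/3 : ℝ) : ℂ)*Complex.I))) *
          Complex.exp (((Real.pi/3 : ℝ) : ℂ)*Complex.I))
      = ∫ t in (ε/2)..(1:ℝ),
          Complex.exp (-(η:ℂ) * ((t:ℂ) * Complex.exp (((Real.pi/3 : ℝ) : ℂ)*Complex.I))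
            + ((t:ℂ)*Complex.exp (((Real.pi/3 : ℝ) : ℂ)*Complex.I))^3/3) / (t:ℂ) := by
    rw [Ioi_sub_Ioi (rayI_s17 η (min (ε/2) 1) (lt_min hε2 one_pos) c1_re c1_cube)]
    apply intervalIntegral.integral_congr
    intro t ht
    exact div_c_trick _ _ _ hc1ne
  have e3 : (∫ t in Set.Ioi (ε/2),
        (Complex.exp (-(η:ℂ) * ((t:ℂ) * Complex.exp (-((Real.pi/3 : ℝ) : ℂ)*Complex.I))
            + ((t:ℂ) * Complex.exp (-((Real.pi/3 : ℝ) : ℂ)*Complex.I))^3/3) /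
          ((t:ℂ) * Complex.exp (-((Real.pi/3 : ℝ) : ℂ)*Complex.I))) *
          Complex.exp (-((Real.pi/3 : ℝ) : ℂ)*Complex.I))
      - (∫ s in Set.Ioi (1:ℝ),
        (Complex.exp (-(η:ℂ) * ((s:ℂ) * Complex.exp (-((Real.pi/3 : ℝ) : ℂ)*Complex.I))
            + ((s:ℂ) * Complex.exp (-((Real.pi/3 : ℝ) : ℂ)*Complex.I))^3/3) /
          ((s:ℂ) * Complex.exp (-((Real.pi/3 : ℝ) : ℂ)*Complex.I))) *
          Complex.exp (-((Real.pi/3 : ℝ) : ℂ)*Complex.I))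
      = ∫ t in (ε/2)..(1:ℝ),
          Complex.exp (-(η:ℂ) * ((t:ℂ) * Complex.exp (-((Real.pi/3 : ℝ) : ℂ)*Complex.I))
            + ((t:ℂ)*Complex.exp (-((Real.pi/3 : ℝ) : ℂ)*Complex.I))^3/3) / (t:ℂ) := by
    rw [Ioi_sub_Ioi (rayI_s17 η (min (ε/2) 1) (lt_min hε2 one_pos) c2_re c2_cube)]
    apply intervalIntegral.integral_congr
    intro t ht
    exact div_c_trick _ _ _ hc2ne
  -- Step 3 : arc simplifications
  have k2 : (∫ θ in (Real.pi/3)..(5*Real.pi/3),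
        (Complex.exp (-(η:ℂ) * (((ε/2 : ℝ) : ℂ) * Complex.exp ((θ:ℂ)*Complex.I))
            + (((ε/2 : ℝ) : ℂ) * Complex.exp ((θ:ℂ)*Complex.I))^3/3) /
          (((ε/2 : ℝ) : ℂ) * Complex.exp ((θ:ℂ)*Complex.I))) *
          (Complex.I * ((ε/2 : ℝ) : ℂ) * Complex.exp ((θ:ℂ)*Complex.I)))
      = Complex.I * ∫ y in (Real.pi/3)..(5*Real.pi/3),
          Complex.exp (-(η:ℂ) * (((ε/2:ℝ):ℂ) * Complex.exp ((y:ℂ)*Complex.I))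
            + ((((ε/2:ℝ):ℂ)) * Complex.exp ((y:ℂ)*Complex.I))^3/3) := by
    rw [← intervalIntegral.integral_const_mul]
    apply intervalIntegral.integral_congr
    intro θ _
    have hr : ((ε/2:ℝ):ℂ) ≠ 0 := Complex.ofReal_ne_zero.mpr hε2.ne'
    have he : Complex.exp ((θ:ℂ)*Complex.I) ≠ 0 := Complex.exp_ne_zero _
    exact div_mul_trick _ _ _ (mul_ne_zero hr he)
  have k4 : (∫ θ in Set.Ioc (-(Real.pi/3)) (Real.pi/3),
        Complex.I * Complex.exp (-(η:ℂ) * Complex.exp ((θ:ℂ)*Complex.I)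
          + (Complex.exp ((θ:ℂ)*Complex.I))^3/3))
      = Complex.I * ∫ θ in (-(Real.pi/3))..(Real.pi/3),
          Complex.exp (-(η:ℂ) * Complex.exp ((θ:ℂ)*Complex.I)
            + (Complex.exp ((θ:ℂ)*Complex.I))^3/3) := by
    rw [← intervalIntegral.integral_of_le (by linarith : -(Real.pi/3) ≤ Real.pi/3),
      intervalIntegral.integral_const_mul]
  have hrect := rect_identity η ε hε
  have hc : (1/(2*(Real.pi:ℂ)*Complex.I)) * (2*(Real.pi:ℂ)*Complex.I) = 1 := by
    rw [one_div, inv_mul_cancel₀]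
    simp [Real.pi_ne_zero, Complex.I_ne_zero]
  linear_combination (1/(2*(Real.pi:ℂ)*Complex.I)) * (-e1 + e3 + k2 + k4 - hrect) + hc
end

section
/- Fix a real γ ≥ 1 and a real η. For real M > 0 set N = M/γ² and y_M = (1+γ^{−1})² + ((1+γ)^{4/3}/(γ(2M)^{2/3})) η. Then lim_{M → ∞} (1+γ^{−1})^{2(N−M)−1} · e^{M−N} · y_M^{M−N+1/2} · e^{((1−γ)/(1+γ)) M y_M} = 1, where y_M^{M−N+1/2} is the real power (well defined since y_M > 0 for all sufficiently large M). -/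
open Filter Real

/-- `|log (1+x) - x| ≤ 2 x^2` for `|x| ≤ 1/2`. -/
lemma stmt18_log_bound {x : ℝ} (hx : |x| ≤ 1/2) : |Real.log (1+x) - x| ≤ 2 * x^2 := by
  have h1 : |(-x)| < 1 := by rw [abs_neg]; linarith [hx]
  have h := Real.abs_log_sub_add_sum_range_le h1 1
  simp [Finset.sum_range_one] at h
  have hxx : |(-x)| ≤ 1/2 := by rw [abs_neg]; exact hx
  have h2 : 1 - |(-x)| ≥ 1/2 := by linarith
  rw [neg_add_eq_sub] at h
  refine h.trans ?_
  rw [div_le_iff₀ (by linarith : (0:ℝ) < 1 - |x|)]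
  nlinarith [sq_nonneg x, abs_nonneg x]

theorem stmt18 (γ : ℝ) (hγ : 1 ≤ γ) (η : ℝ) :
    Filter.Tendsto (fun M : ℝ =>
      (1+γ⁻¹) ^ (2*(M/γ^2 - M) - 1) * Real.exp (M - M/γ^2) *
      ((1+γ⁻¹)^2 + (1+γ) ^ ((4:ℝ)/3) / (γ*(2*M) ^ ((2:ℝ)/3)) * η) ^ (M - M/γ^2 + 1/2) *
      Real.exp ((1-γ)/(1+γ) * M *
        ((1+γ⁻¹)^2 + (1+γ) ^ ((4:ℝ)/3) / (γ*(2*M) ^ ((2:ℝ)/3)) * η)))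
      Filter.atTop (nhds 1) := by
  have hγ0 : (0:ℝ) < γ := lt_of_lt_of_le one_pos hγ
  have hγ1 : (0:ℝ) < 1 + γ := by linarith
  have hγne : γ ≠ 0 := ne_of_gt hγ0
  have hγ1ne : (1 + γ) ≠ 0 := ne_of_gt hγ1
  have hc : (0:ℝ) < 1 + γ⁻¹ := by positivity
  set a : ℝ := (1+γ⁻¹)^2 with ha_def
  have ha : 0 < a := by positivity
  set δ : ℝ → ℝ := fun M => (1+γ) ^ ((4:ℝ)/3) / (γ*(2*M) ^ ((2:ℝ)/3)) * η / a with hδ_def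
  set κ : ℝ := 1 - (γ^2)⁻¹ with hκ_def
  set C : ℝ := (1+γ) ^ ((4:ℝ)/3) * η / (γ * a) with hC_def
  clear_value a δ κ C
  -- δ M = C * ((2M)^(2/3))⁻¹
  have hδeq : ∀ M : ℝ, δ M = C * ((2*M) ^ ((2:ℝ)/3))⁻¹ := by
    intro M; simp only [hδ_def, hC_def]; ring
  -- δ → 0
  have ht : Tendsto (fun M : ℝ => ((2*M) ^ ((2:ℝ)/3))⁻¹) atTop (nhds 0) := by
    apply Filter.Tendsto.inv_tendsto_atTop
    exact (tendsto_rpow_atTop (by norm_num : (0:ℝ) < 2/3)).comp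
      (Filter.tendsto_id.const_mul_atTop (by norm_num : (0:ℝ) < 2))
  have hδ0 : Tendsto δ atTop (nhds 0) := by
    have := ht.const_mul C
    rw [mul_zero] at this
    exact this.congr (fun M => (hδeq M).symm)
  -- M * δ M ^ 2 → 0
  have hMδ2 : Tendsto (fun M => M * δ M ^ 2) atTop (nhds 0) := by
    have key : ∀ᶠ M : ℝ in atTop,
        C^2 * 2 ^ (-((4:ℝ)/3)) * M ^ (-((1:ℝ)/3)) = M * δ M ^ 2 := by
      filter_upwards [eventually_gt_atTop (0:ℝ)] with M hM
      have h2M : (0:ℝ) < 2*M := by linarith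
      have e1 : ((2*M) ^ ((2:ℝ)/3)) ^ (2:ℕ) = (2*M) ^ ((4:ℝ)/3) := by
        rw [← Real.rpow_natCast ((2*M) ^ ((2:ℝ)/3)) 2, ← Real.rpow_mul h2M.le]
        norm_num
      have e2 : (2*M) ^ ((4:ℝ)/3) = 2 ^ ((4:ℝ)/3) * M ^ ((4:ℝ)/3) :=
        Real.mul_rpow (by norm_num) hM.le
      have e3 : M * (M ^ ((4:ℝ)/3))⁻¹ = M ^ (-((1:ℝ)/3)) := by
        have e3' : M ^ ((1:ℝ) + -((4:ℝ)/3)) = M * (M ^ ((4:ℝ)/3))⁻¹ := by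
          rw [Real.rpow_add hM, Real.rpow_one, Real.rpow_neg hM.le]
        rw [← e3']
        norm_num
      rw [hδeq M]
      rw [mul_pow, inv_pow, e1, e2, mul_inv]
      rw [Real.rpow_neg (by norm_num : (0:ℝ) ≤ 2)]
      calc C ^ 2 * (2 ^ ((4:ℝ)/3))⁻¹ * M ^ (-((1:ℝ)/3))
          = C ^ 2 * (2 ^ ((4:ℝ)/3))⁻¹ * (M * (M ^ ((4:ℝ)/3))⁻¹) := by rw [e3]
        _ = M * (C ^ 2 * ((2 ^ ((4:ℝ)/3))⁻¹ * (M ^ ((4:ℝ)/3))⁻¹)) := by ring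
    have h0 : Tendsto (fun M : ℝ => C^2 * 2 ^ (-((4:ℝ)/3)) * M ^ (-((1:ℝ)/3)))
        atTop (nhds 0) := by
      have := (tendsto_rpow_neg_atTop (by norm_num : (0:ℝ) < 1/3)).const_mul
        (C^2 * 2 ^ (-((4:ℝ)/3)))
      rw [mul_zero] at this
      exact this
    exact h0.congr' key
  -- log(1+δ) → 0
  have hlog : Tendsto (fun M => Real.log (1 + δ M)) atTop (nhds 0) := by
    have h1 : Tendsto (fun M => 1 + δ M) atTop (nhds 1) := by
      have := tendsto_const_nhds.add hδ0 (f := fun _ : ℝ => (1:ℝ))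
      simpa using this
    have := (Real.continuousAt_log (by norm_num : (1:ℝ) ≠ 0)).tendsto.comp h1
    simpa [Function.comp_def] using this
  -- exponent E → 0
  set E : ℝ → ℝ := fun M => κ * M * (Real.log (1 + δ M) - δ M)
    + (1/2) * Real.log (1 + δ M) with hE_def
  have hδsmall : ∀ᶠ M : ℝ in atTop, |δ M| ≤ 1/2 := by
    have := hδ0 (Metric.closedBall_mem_nhds (0:ℝ) (by norm_num : (0:ℝ) < 1/2))
    simpa [Metric.closedBall, Real.dist_eq] using this
  have hE0 : Tendsto E atTop (nhds 0) := by
    have h1 : Tendsto (fun M => κ * M * (Real.log (1 + δ M) - δ M)) atTop (nhds 0) := by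
      apply squeeze_zero_norm' (a := fun M => |κ| * 2 * (M * δ M ^ 2))
      · filter_upwards [hδsmall, eventually_ge_atTop (0:ℝ)] with M hs hM
        have hb := stmt18_log_bound hs
        have : |κ * M * (Real.log (1 + δ M) - δ M)|
            = |κ| * M * |Real.log (1 + δ M) - δ M| := by
          rw [abs_mul, abs_mul, abs_of_nonneg hM]
        rw [Real.norm_eq_abs, this]
        calc |κ| * M * |Real.log (1 + δ M) - δ M| ≤ |κ| * M * (2 * δ M ^ 2) := by
              apply mul_le_mul_of_nonneg_left hb (by positivity)
          _ = |κ| * 2 * (M * δ M ^ 2) := by ring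
      · have := hMδ2.const_mul (|κ| * 2)
        rw [mul_zero] at this
        exact this
    have h2 := hlog.const_mul (1/2 : ℝ)
    rw [mul_zero] at h2
    have := h1.add h2
    rw [add_zero] at this
    exact this
  -- final: function eventually equals exp ∘ E
  have hfinal : Tendsto (fun M => Real.exp (E M)) atTop (nhds 1) := by
    have := Real.continuous_exp.continuousAt.tendsto.comp hE0
    simpa [Function.comp_def] using this
  apply hfinal.congr'
  filter_upwards [hδsmall, eventually_gt_atTop (0:ℝ)] with M hs hM
  have h1δ : (0:ℝ) < 1 + δ M := by
    have := abs_le.mp hs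
    linarith [this.1]
  -- rewrite y = a * (1 + δ M)
  have hy : a + (1+γ) ^ ((4:ℝ)/3) / (γ*(2*M) ^ ((2:ℝ)/3)) * η = a * (1 + δ M) := by
    simp only [hδ_def]
    field_simp
  set p : ℝ := M - M/γ^2 + 1/2 with hp_def
  set q : ℝ := 2*(M/γ^2 - M) - 1 with hq_def
  rw [hy]
  rw [Real.mul_rpow ha.le h1δ.le]
  have hap : a ^ p = (1+γ⁻¹) ^ (2*p) := by
    rw [ha_def, ← Real.rpow_natCast (1+γ⁻¹) 2, ← Real.rpow_mul hc.le]
    norm_num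
  rw [hap]
  have hcc : (1+γ⁻¹) ^ q * Real.exp (M - M/γ^2) * ((1+γ⁻¹) ^ (2*p) * (1 + δ M) ^ p)
      = ((1+γ⁻¹) ^ q * (1+γ⁻¹) ^ (2*p)) * (Real.exp (M - M/γ^2) * (1 + δ M) ^ p) := by
    ring
  rw [hcc, ← Real.rpow_add hc]
  have hq2p : q + 2*p = 0 := by rw [hq_def, hp_def]; ring
  rw [hq2p, Real.rpow_zero, one_mul]
  rw [Real.rpow_def_of_pos h1δ, ← Real.exp_add, ← Real.exp_add]
  congr 1
  -- the exponent identity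
  have hkey : (1-γ)/(1+γ) * a = -κ := by
    rw [ha_def, hκ_def]
    field_simp
    ring
  have hδM : δ M * a = (1+γ) ^ ((4:ℝ)/3) / (γ*(2*M) ^ ((2:ℝ)/3)) * η := by
    simp only [hδ_def]
    field_simp
  rw [hE_def]
  have hMN : M - M/γ^2 = κ * M := by rw [hκ_def]; field_simp
  -- expand: goal is M - M/γ^2 + log(1+δ)*p + (1-γ)/(1+γ)*M*(a*(1+δ)) = E M
  have expand : (1-γ)/(1+γ) * M * (a * (1 + δ M)) = -κ * M * (1 + δ M) := by
    rw [← hkey]; ring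
  rw [expand, hp_def, hMN]
  ring
end
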